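/- arXiv:2304.00459 — 6 statements merged into one kernel-verified Lean document; each statement's English description precedes it below -/
import Mathlib

section
/- Consider binary classification data $(a_i, y_i)$ for $i = 1,\ldots,n$ with $\|a_i\| \leq 1$ and $y_i \in \{\pm 1\}$, which is linearly separable with margin $\tau > 0$: there exists a unit vector $x^*$ with $y_i a_i^T x^* \geq \tau$ for all $i$. Let $\ell: \mathbb{R} \to \mathbb{R}$ be a differentiable monotonic non-increasing function and define $f_i(x) = \ell(y_i a_i^T x)$ and $f = \frac{1}{n}\sum_{i=1}^n f_i$. Then the strong growth condition holds with $\rho \leq n/\tau^2$: for all $x \in \mathbb{R}^d$, $\frac{1}{n}\sum_{i=1}^n \|\nabla f_i(x)\|^2 \leq \frac{n}{\tau^2}\|\nabla f(x)\|^2$. -/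
open scoped RealInnerProductSpace

/-!
Write `z i = y i • a i`, so that `∇ f i x = ℓ'(⟪z i, x⟫) • z i`. With the nonnegative weights
`w i = -ℓ'(⟪z i, x⟫)`, `‖z i‖ ≤ 1` gives `∑ ‖∇ f i x‖² ≤ (∑ w i)²`, while pairing
`∑ w i • z i = -n ∇ F x` with the unit vector `x*` of margin `τ` gives `τ ∑ w i ≤ n ‖∇ F x‖`.
-/

section Gradient

variable {E : Type*} [NormedAddCommGroup E] [InnerProductSpace ℝ E] [CompleteSpace E]

theorem HasGradientAt.sum {ι : Type*} {s : Finset ι} {f : ι → E → ℝ} {f' : ι → E} {x : E}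
    (h : ∀ i ∈ s, HasGradientAt (f i) (f' i) x) :
    HasGradientAt (fun x => ∑ i ∈ s, f i x) (∑ i ∈ s, f' i) x := by
  rw [hasGradientAt_iff_hasFDerivAt, map_sum]
  exact HasFDerivAt.fun_sum fun i hi => hasGradientAt_iff_hasFDerivAt.mp (h i hi)

theorem HasGradientAt.const_mul {f : E → ℝ} {f' x : E} (h : HasGradientAt f f' x) (c : ℝ) :
    HasGradientAt (fun x => c * f x) (c • f') x := by
  rw [hasGradientAt_iff_hasFDerivAt, map_smul]
  exact (hasGradientAt_iff_hasFDerivAt.mp h).const_mul c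

theorem hasGradientAt_comp_inner {ℓ : ℝ → ℝ} (z x : E) (hℓ : DifferentiableAt ℝ ℓ ⟪z, x⟫) :
    HasGradientAt (fun x => ℓ ⟪z, x⟫) (deriv ℓ ⟪z, x⟫ • z) x := by
  rw [hasGradientAt_iff_hasFDerivAt, map_smul]
  exact hℓ.hasDerivAt.comp_hasFDerivAt x (innerSL ℝ z).hasFDerivAt

end Gradient

section Margin

variable {E : Type*} [NormedAddCommGroup E] [InnerProductSpace ℝ E]
  {ι : Type*} {s : Finset ι} {w : ι → ℝ} {z : ι → E}

theorem mul_sum_le_norm_sum_smul_of_margin {u : E} {τ : ℝ} (hw : ∀ i ∈ s, 0 ≤ w i)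
    (hu : ‖u‖ ≤ 1) (hmargin : ∀ i ∈ s, τ ≤ ⟪z i, u⟫) :
    τ * ∑ i ∈ s, w i ≤ ‖∑ i ∈ s, w i • z i‖ :=
  calc τ * ∑ i ∈ s, w i = ∑ i ∈ s, w i * τ := by rw [Finset.mul_sum]; simp only [mul_comm]
    _ ≤ ∑ i ∈ s, w i * ⟪z i, u⟫ :=
        Finset.sum_le_sum fun i hi => mul_le_mul_of_nonneg_left (hmargin i hi) (hw i hi)
    _ = ⟪∑ i ∈ s, w i • z i, u⟫ := by simp only [sum_inner, real_inner_smul_left]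
    _ ≤ ‖∑ i ∈ s, w i • z i‖ * ‖u‖ := real_inner_le_norm _ _
    _ ≤ ‖∑ i ∈ s, w i • z i‖ := mul_le_of_le_one_right (norm_nonneg _) hu

theorem sum_sq_norm_smul_le_sq_sum (hw : ∀ i ∈ s, 0 ≤ w i) (hz : ∀ i ∈ s, ‖z i‖ ≤ 1) :
    ∑ i ∈ s, ‖w i • z i‖ ^ 2 ≤ (∑ i ∈ s, w i) ^ 2 :=
  calc ∑ i ∈ s, ‖w i • z i‖ ^ 2 ≤ ∑ i ∈ s, w i ^ 2 := by
        refine Finset.sum_le_sum fun i hi => pow_le_pow_left₀ (norm_nonneg _) ?_ 2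
        rw [norm_smul, Real.norm_of_nonneg (hw i hi)]
        exact mul_le_of_le_one_right (hw i hi) (hz i hi)
    _ ≤ (∑ i ∈ s, w i) ^ 2 := Finset.sum_sq_le_sq_sum_of_nonneg hw

theorem sq_mul_sum_sq_norm_smul_le_of_margin {u : E} {τ : ℝ} (hτ : 0 ≤ τ)
    (hw : ∀ i ∈ s, 0 ≤ w i) (hz : ∀ i ∈ s, ‖z i‖ ≤ 1) (hu : ‖u‖ ≤ 1)
    (hmargin : ∀ i ∈ s, τ ≤ ⟪z i, u⟫) :
    τ ^ 2 * ∑ i ∈ s, ‖w i • z i‖ ^ 2 ≤ ‖∑ i ∈ s, w i • z i‖ ^ 2 :=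
  calc τ ^ 2 * ∑ i ∈ s, ‖w i • z i‖ ^ 2 ≤ (τ * ∑ i ∈ s, w i) ^ 2 := by
        rw [mul_pow]
        exact mul_le_mul_of_nonneg_left (sum_sq_norm_smul_le_sq_sum hw hz) (sq_nonneg τ)
    _ ≤ ‖∑ i ∈ s, w i • z i‖ ^ 2 :=
        pow_le_pow_left₀ (mul_nonneg hτ (Finset.sum_nonneg hw))
          (mul_sum_le_norm_sum_smul_of_margin hw hu hmargin) 2

end Margin

theorem sgc_for_separable_monotone_losses_general
    (d n : ℕ)
    (a : Fin n → EuclideanSpace ℝ (Fin d))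
    (y : Fin n → ℝ) (hy : ∀ i, y i = 1 ∨ y i = -1)
    (ha : ∀ i, ‖a i‖ ≤ 1)
    (τ : ℝ) (hτ : 0 < τ)
    (xstar : EuclideanSpace ℝ (Fin d)) (hxs : ‖xstar‖ = 1)
    (hmargin : ∀ i, τ ≤ y i * ⟪a i, xstar⟫)
    (ℓ : ℝ → ℝ) (hℓdiff : Differentiable ℝ ℓ)
    (hℓmono : ∀ t : ℝ, deriv ℓ t ≤ 0)
    (f : Fin n → EuclideanSpace ℝ (Fin d) → ℝ)
    (hf : ∀ i x, f i x = ℓ (y i * ⟪a i, x⟫))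
    (F : EuclideanSpace ℝ (Fin d) → ℝ)
    (hF : F = fun x => (n : ℝ)⁻¹ * ∑ i, f i x) :
    ∀ x, (n : ℝ)⁻¹ * ∑ i, ‖gradient (f i) x‖ ^ 2
      ≤ ((n : ℝ) / τ ^ 2) * ‖gradient F x‖ ^ 2 := by
  intro x
  set z : Fin n → EuclideanSpace ℝ (Fin d) := fun i => y i • a i
  set w : Fin n → ℝ := fun i => -deriv ℓ ⟪z i, x⟫
  have hgrad_f : ∀ i, HasGradientAt (f i) (-(w i • z i)) x := fun i => by
    rw [← neg_smul, neg_neg]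
    convert hasGradientAt_comp_inner (z i) x (hℓdiff _) using 2 with x'
    simp only [hf, z, real_inner_smul_left]
  have hgrad_F : gradient F x = -((n : ℝ)⁻¹ • ∑ i, w i • z i) := by
    rw [hF, ← smul_neg, ← Finset.sum_neg_distrib]
    exact ((HasGradientAt.sum fun i _ => hgrad_f i).const_mul _).gradient
  have hz : ∀ i ∈ Finset.univ, ‖z i‖ ≤ 1 := fun i _ => by
    rcases hy i with h | h <;> simpa [z, norm_smul, h] using ha i
  have hgrowth := sq_mul_sum_sq_norm_smul_le_of_margin (w := w) hτ.le
    (fun i _ => neg_nonneg.mpr (hℓmono _)) hz hxs.le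
    fun i _ => by simpa only [z, real_inner_smul_left] using hmargin i
  simp only [(hgrad_f _).gradient, hgrad_F, norm_neg]
  rw [norm_smul, Real.norm_of_nonneg (by positivity), div_mul_eq_mul_div, le_div_iff₀ (by positivity)]
  calc (n : ℝ)⁻¹ * (∑ i, ‖w i • z i‖ ^ 2) * τ ^ 2 ≤ (n : ℝ)⁻¹ * ‖∑ i, w i • z i‖ ^ 2 := by
        rw [mul_assoc, mul_comm _ (τ ^ 2)]
        exact mul_le_mul_of_nonneg_left hgrowth (by positivity)
    _ = n * ((n : ℝ)⁻¹ * ‖∑ i, w i • z i‖) ^ 2 := by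
        rcases n.eq_zero_or_pos with rfl | hn
        · simp
        · field_simp

/-- On linearly separable data with margin `τ`, losses of the form
`f_i(x) = ℓ(y_i ⟪a_i, x⟫)` with `ℓ` differentiable and non-increasing satisfy
the strong growth condition with constant `n / τ²`. -/
theorem sgc_for_separable_monotone_losses
    (d n : ℕ) (hn : 0 < n)
    (a : Fin n → EuclideanSpace ℝ (Fin d))
    (y : Fin n → ℝ) (hy : ∀ i, y i = 1 ∨ y i = -1)
    (ha : ∀ i, ‖a i‖ ≤ 1)
    (τ : ℝ) (hτ : 0 < τ)
    (xstar : EuclideanSpace ℝ (Fin d)) (hxs : ‖xstar‖ = 1)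
    (hmargin : ∀ i, τ ≤ y i * ⟪a i, xstar⟫)
    (ℓ : ℝ → ℝ) (hℓdiff : Differentiable ℝ ℓ)
    (hℓmono : ∀ t : ℝ, deriv ℓ t ≤ 0)
    (f : Fin n → EuclideanSpace ℝ (Fin d) → ℝ)
    (hf : ∀ i x, f i x = ℓ (y i * ⟪a i, x⟫))
    (F : EuclideanSpace ℝ (Fin d) → ℝ)
    (hF : F = fun x => (n : ℝ)⁻¹ * ∑ i, f i x) :
    ∀ x, (n : ℝ)⁻¹ * ∑ i, ‖gradient (f i) x‖ ^ 2
      ≤ ((n : ℝ) / τ ^ 2) * ‖gradient F x‖ ^ 2 :=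
  sgc_for_separable_monotone_losses_general d n a y hy ha τ hτ xstar hxs hmargin ℓ hℓdiff hℓmono f
    hf F hF
end

section
/- Let $z_1, \ldots, z_n \in \mathbb{R}^d$ with $\|z_i\| \leq 1$, suppose there is a unit vector $x^*$ with $z_i^T x^* \geq \tau > 0$ for all $i$, and let $c_1, \ldots, c_n$ be real numbers all of the same sign (i.e., $c_i c_j \geq 0$ for all $i,j$). Then $\frac{1}{n}\sum_{i=1}^n c_i^2 \|z_i\|^2 \leq \frac{n}{\tau^2}\left\|\frac{1}{n}\sum_{i=1}^n c_i z_i\right\|^2$. -/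
open scoped RealInnerProductSpace

noncomputable section

/-! Pairing `∑ i, c i • z i` with the unit vector `x*` and using that the `c i` share a sign gives
`‖∑ i, c i • z i‖ ≥ τ ∑ i, |c i|`, and `(∑ i, |c i|)² ≥ ∑ i, c i²`; on the other side `‖z i‖ ≤ 1`
bounds `∑ i, c i² ‖z i‖²` by `∑ i, c i²`. -/

open Finset

section

variable {ι E : Type*} [Fintype ι] [NormedAddCommGroup E] [InnerProductSpace ℝ E]

lemma forall_nonneg_or_forall_nonpos_of_mul_nonneg {c : ι → ℝ} (hc : ∀ i j, 0 ≤ c i * c j) :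
    (∀ i, 0 ≤ c i) ∨ ∀ i, c i ≤ 0 := by
  by_contra! h
  obtain ⟨⟨i, hi⟩, j, hj⟩ := h
  nlinarith [hc i j]

variable {z : ι → E} {x : E} {τ : ℝ} {c : ι → ℝ}

lemma mul_sum_le_norm_sum_smul (hx : ‖x‖ ≤ 1) (hmargin : ∀ i, τ ≤ ⟪z i, x⟫)
    (hc : ∀ i, 0 ≤ c i) : τ * ∑ i, c i ≤ ‖∑ i, c i • z i‖ :=
  calc τ * ∑ i, c i = ∑ i, c i * τ := by rw [mul_sum]; simp_rw [mul_comm]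
    _ ≤ ∑ i, c i * ⟪z i, x⟫ := sum_le_sum fun i _ => mul_le_mul_of_nonneg_left (hmargin i) (hc i)
    _ = ⟪∑ i, c i • z i, x⟫ := by simp_rw [sum_inner, real_inner_smul_left]
    _ ≤ ‖∑ i, c i • z i‖ * ‖x‖ := real_inner_le_norm _ _
    _ ≤ ‖∑ i, c i • z i‖ := mul_le_of_le_one_right (norm_nonneg _) hx

lemma mul_sum_abs_le_norm_sum_smul (hx : ‖x‖ ≤ 1) (hmargin : ∀ i, τ ≤ ⟪z i, x⟫)
    (hc : ∀ i j, 0 ≤ c i * c j) : τ * ∑ i, |c i| ≤ ‖∑ i, c i • z i‖ := by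
  rcases forall_nonneg_or_forall_nonpos_of_mul_nonneg hc with hpos | hneg
  · simpa only [abs_of_nonneg (hpos _)] using mul_sum_le_norm_sum_smul hx hmargin hpos
  · simpa only [abs_of_nonpos (hneg _), neg_smul, sum_neg_distrib, norm_neg] using
      mul_sum_le_norm_sum_smul (c := fun i => -c i) hx hmargin fun i => neg_nonneg.2 (hneg i)

lemma sq_mul_sum_sq_le_norm_sum_smul_sq (hτ : 0 ≤ τ) (hx : ‖x‖ ≤ 1)
    (hmargin : ∀ i, τ ≤ ⟪z i, x⟫) (hc : ∀ i j, 0 ≤ c i * c j) :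
    τ ^ 2 * ∑ i, c i ^ 2 ≤ ‖∑ i, c i • z i‖ ^ 2 :=
  calc τ ^ 2 * ∑ i, c i ^ 2 = τ ^ 2 * ∑ i, |c i| ^ 2 := by simp only [sq_abs]
    _ ≤ τ ^ 2 * (∑ i, |c i|) ^ 2 := by
        gcongr; exact sum_sq_le_sq_sum_of_nonneg fun i _ => abs_nonneg _
    _ = (τ * ∑ i, |c i|) ^ 2 := by ring
    _ ≤ ‖∑ i, c i • z i‖ ^ 2 := by
        gcongr
        exact mul_sum_abs_le_norm_sum_smul hx hmargin hc

end

theorem separable_sign_inequality_general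
    (d n : ℕ)
    (z : Fin n → EuclideanSpace ℝ (Fin d))
    (hz : ∀ i, ‖z i‖ ≤ 1)
    (τ : ℝ) (hτ : 0 < τ)
    (xstar : EuclideanSpace ℝ (Fin d)) (hxs : ‖xstar‖ = 1)
    (hmargin : ∀ i, τ ≤ ⟪z i, xstar⟫)
    (c : Fin n → ℝ) (hc : ∀ i j, 0 ≤ c i * c j) :
    (n : ℝ)⁻¹ * ∑ i, (c i) ^ 2 * ‖z i‖ ^ 2
      ≤ ((n : ℝ) / τ ^ 2) * ‖(n : ℝ)⁻¹ • ∑ i, c i • z i‖ ^ 2 := by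
  set S := ∑ i, c i • z i
  have hS : τ ^ 2 * ∑ i, c i ^ 2 ≤ ‖S‖ ^ 2 :=
    sq_mul_sum_sq_le_norm_sum_smul_sq hτ.le hxs.le hmargin hc
  have hz2 : ∑ i, c i ^ 2 * ‖z i‖ ^ 2 ≤ ∑ i, c i ^ 2 :=
    sum_le_sum fun i _ => mul_le_of_le_one_right (sq_nonneg _) (pow_le_one₀ (norm_nonneg _) (hz i))
  calc (n : ℝ)⁻¹ * ∑ i, c i ^ 2 * ‖z i‖ ^ 2 ≤ (n : ℝ)⁻¹ * (‖S‖ ^ 2 / τ ^ 2) := by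
        gcongr
        exact hz2.trans ((le_div_iff₀' (by positivity)).2 hS)
    _ = (n / τ ^ 2) * ‖(n : ℝ)⁻¹ • S‖ ^ 2 := by
        -- valid also for `n = 0`, where `0⁻¹ = 0`
        have hn_inv : (n : ℝ) * (n : ℝ)⁻¹ ^ 2 = (n : ℝ)⁻¹ := by
          simpa only [inv_inv, sq, mul_assoc] using inv_mul_mul_self (n : ℝ)⁻¹
        rw [norm_smul, norm_inv, RCLike.norm_natCast]
        linear_combination (-(‖S‖ ^ 2 / τ ^ 2)) * hn_inv

/-- Key inequality underlying the strong growth condition bound for monotone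
losses on linearly separable data. -/
theorem separable_sign_inequality
    (d n : ℕ) (hn : 0 < n)
    (z : Fin n → EuclideanSpace ℝ (Fin d))
    (hz : ∀ i, ‖z i‖ ≤ 1)
    (τ : ℝ) (hτ : 0 < τ)
    (xstar : EuclideanSpace ℝ (Fin d)) (hxs : ‖xstar‖ = 1)
    (hmargin : ∀ i, τ ≤ ⟪z i, xstar⟫)
    (c : Fin n → ℝ) (hc : ∀ i j, 0 ≤ c i * c j) :
    (n : ℝ)⁻¹ * ∑ i, (c i) ^ 2 * ‖z i‖ ^ 2
      ≤ ((n : ℝ) / τ ^ 2) * ‖(n : ℝ)⁻¹ • ∑ i, c i • z i‖ ^ 2 :=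
  separable_sign_inequality_general d n z hz τ hτ xstar hxs hmargin c hc
end
end

section
/- Suppose $f = \frac{1}{n}\sum_{i=1}^n f_i$ where $f$ is $L$-smooth, $f$ satisfies the $\mu$-PL condition with minimum value $f(x^*)$, and the weak growth condition holds with parameter $\alpha > 0$: $\mathbb{E}_i[\|\nabla f_i(x)\|^2] \leq 2\alpha L(f(x)-f(x^*))$ where $i$ is uniform on $\{1,\ldots,n\}$. Then SGD with constant step size $\eta = \frac{\mu}{L^2\alpha}$, i.e., $x^{k+1} = x^k - \eta \nabla f_{i_k}(x^k)$ with $i_k$ sampled uniformly and independently, satisfies $\mathbb{E}[f(x^K) - f(x^*)] \leq \left(1 - \frac{\mu^2}{L^2\alpha}\right)^K (f(x^0) - f(x^*))$ for every $K \geq 0$. -/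
/-
One SGD step from `x` moves along `-η ∇fᵢ(x)`. The descent lemma bounds `F` after the step by
`F x - η ⟪∇F x, ∇fᵢ x⟫ + (L/2) η² ‖∇fᵢ x‖²`. Averaging over `i`, unbiasedness turns the inner
product into `‖∇F x‖²`, which PL bounds below by `2μ (F x - F*)`, while the weak growth condition
bounds the second moment by `2αL (F x - F*)`. Hence the expected gap contracts by
`1 - 2μη + αL²η²`, which equals `1 - μ²/(L²α)` at `η = μ/(L²α)`. Splitting the uniform average
over index sequences at the last index iterates this `K` times.
-/

noncomputable section

/-- The SGD iterates after `K` steps, as a function of the sequence of sampled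
indices `ω : Fin K → Fin n`, with gradient oracle `g`, step size `η` and
initialization `x0`. -/
def sgdRun {d n : ℕ}
    (g : Fin n → EuclideanSpace ℝ (Fin d) → EuclideanSpace ℝ (Fin d))
    (η : ℝ) (x0 : EuclideanSpace ℝ (Fin d)) :
    (K : ℕ) → (Fin K → Fin n) → EuclideanSpace ℝ (Fin d)
  | 0, _ => x0
  | K + 1, ω =>
      sgdRun g η x0 K (fun j => ω j.castSucc) -
        η • g (ω (Fin.last K)) (sgdRun g η x0 K (fun j => ω j.castSucc))

open RealInnerProductSpace Set

variable {E : Type*} [NormedAddCommGroup E] [InnerProductSpace ℝ E] [CompleteSpace E]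

theorem le_add_inner_gradient_add_sq_of_lipschitz_gradient {F : E → ℝ}
    (hF : Differentiable ℝ F) {L : ℝ}
    (hlip : ∀ x y, ‖gradient F x - gradient F y‖ ≤ L * ‖x - y‖) (x v : E) :
    F (x + v) ≤ F x + ⟪gradient F x, v⟫ + L / 2 * ‖v‖ ^ 2 := by
  -- compare `t ↦ F (x + t • v)` on `[0, 1]` with its quadratic model through `t = 0`
  have hline : ∀ t : ℝ, HasDerivAt (fun t : ℝ => F (x + t • v))
      ⟪gradient F (x + t • v), v⟫ t := by
    intro t
    have hpath : HasDerivAt (fun t : ℝ => x + t • v) v t := by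
      simpa using ((hasDerivAt_id t).smul_const v).const_add x
    simpa [Function.comp_def] using
      (hF _).hasGradientAt.hasFDerivAt.comp_hasDerivAt t hpath
  have hquad : ∀ t : ℝ, HasDerivAt
      (fun t : ℝ => F x + t * ⟪gradient F x, v⟫ + L / 2 * t ^ 2 * ‖v‖ ^ 2)
      (⟪gradient F x, v⟫ + L * t * ‖v‖ ^ 2) t := by
    intro t
    have h := (((hasDerivAt_id' t).mul_const ⟪gradient F x, v⟫).const_add (F x)).add
      (((hasDerivAt_pow 2 t).const_mul (L / 2)).mul_const (‖v‖ ^ 2))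
    exact h.congr_deriv (by push_cast; ring)
  have hslope : ∀ t ∈ Ico (0 : ℝ) 1,
      ⟪gradient F (x + t • v), v⟫ ≤ ⟪gradient F x, v⟫ + L * t * ‖v‖ ^ 2 := by
    rintro t ⟨ht, -⟩
    have := calc ⟪gradient F (x + t • v) - gradient F x, v⟫
        ≤ ‖gradient F (x + t • v) - gradient F x‖ * ‖v‖ := real_inner_le_norm _ _
      _ ≤ L * ‖x + t • v - x‖ * ‖v‖ := by gcongr; exact hlip _ _
      _ = L * t * ‖v‖ ^ 2 := by
        rw [add_sub_cancel_left, norm_smul, Real.norm_of_nonneg ht]; ring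
    rw [inner_sub_left] at this
    linarith
  simpa using image_le_of_deriv_right_le_deriv_boundary
    (fun t _ => (hline t).continuousAt.continuousWithinAt)
    (fun t _ => (hline t).hasDerivWithinAt) (by simp)
    (fun t _ => (hquad t).continuousAt.continuousWithinAt)
    (fun t _ => (hquad t).hasDerivWithinAt) hslope (right_mem_Icc.2 zero_le_one)

theorem gradient_const_mul_sum {ι : Type*} [Fintype ι] {f : ι → E → ℝ} {x : E}
    (hf : ∀ i, DifferentiableAt ℝ (f i) x) (c : ℝ) :
    gradient (fun y => c * ∑ i, f i y) x = c • ∑ i, gradient (f i) x := by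
  refine HasGradientAt.gradient ?_
  rw [hasGradientAt_iff_hasFDerivAt, map_smul, map_sum]
  exact (HasFDerivAt.fun_sum fun i _ => (hf i).hasGradientAt.hasFDerivAt).const_mul c

theorem sum_sub_le_of_pl_of_weak_growth {ι : Type*} [Fintype ι] {F : E → ℝ}
    (hF : Differentiable ℝ F) {L μ α η m : ℝ} (hL : 0 ≤ L) (hμ : 0 < μ) (hη : 0 ≤ η)
    (hlip : ∀ x y, ‖gradient F x - gradient F y‖ ≤ L * ‖x - y‖)
    {x : E} {g : ι → E} (hmean : ∑ i, g i = (Fintype.card ι : ℝ) • gradient F x)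
    (hPL : F x - m ≤ 1 / (2 * μ) * ‖gradient F x‖ ^ 2)
    (hWGC : ∑ i, ‖g i‖ ^ 2 ≤ Fintype.card ι * (2 * α * L * (F x - m))) :
    ∑ i, (F (x - η • g i) - m)
      ≤ Fintype.card ι * (1 - 2 * μ * η + α * L ^ 2 * η ^ 2) * (F x - m) := by
  set n : ℝ := (Fintype.card ι : ℝ)
  set G := gradient F x
  have hstep : ∀ i, F (x - η • g i) ≤ F x - η * ⟪G, g i⟫ + L / 2 * η ^ 2 * ‖g i‖ ^ 2 := by
    intro i
    have h := le_add_inner_gradient_add_sq_of_lipschitz_gradient hF hlip x (-(η • g i))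
    rwa [← sub_eq_add_neg, inner_neg_right, real_inner_smul_right, norm_neg, norm_smul,
      mul_pow, Real.norm_eq_abs, sq_abs, ← sub_eq_add_neg, ← mul_assoc] at h
  have hsum : ∑ i, F (x - η • g i)
      ≤ n * F x - η * n * ‖G‖ ^ 2 + L / 2 * η ^ 2 * ∑ i, ‖g i‖ ^ 2 := by
    calc ∑ i, F (x - η • g i) ≤ ∑ i, (F x - η * ⟪G, g i⟫ + L / 2 * η ^ 2 * ‖g i‖ ^ 2) :=
          Finset.sum_le_sum fun i _ => hstep i
      _ = n * F x - η * ⟪G, ∑ i, g i⟫ + L / 2 * η ^ 2 * ∑ i, ‖g i‖ ^ 2 := by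
          simp only [Finset.sum_add_distrib, Finset.sum_sub_distrib, ← Finset.mul_sum, inner_sum,
            Finset.sum_const, Finset.card_univ, nsmul_eq_mul, n]
      _ = _ := by rw [hmean, real_inner_smul_right, real_inner_self_eq_norm_sq]; ring
  have hgrad : 2 * μ * (F x - m) ≤ ‖G‖ ^ 2 := by
    rwa [one_div, le_inv_mul_iff₀ (by positivity)] at hPL
  have hn : 0 ≤ n := Nat.cast_nonneg _
  simp only [Finset.sum_sub_distrib, Finset.sum_const, Finset.card_univ, nsmul_eq_mul]
  linarith [mul_le_mul_of_nonneg_left hgrad (mul_nonneg hη hn),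
    mul_le_mul_of_nonneg_left hWGC (by positivity : 0 ≤ L / 2 * η ^ 2)]

section SGD

variable {d n : ℕ} (g : Fin n → EuclideanSpace ℝ (Fin d) → EuclideanSpace ℝ (Fin d))
  (η : ℝ) (x0 : EuclideanSpace ℝ (Fin d))

theorem sum_sgdRun_succ {M : Type*} [AddCommMonoid M] (φ : EuclideanSpace ℝ (Fin d) → M)
    (K : ℕ) :
    ∑ ω : Fin (K + 1) → Fin n, φ (sgdRun g η x0 (K + 1) ω)
      = ∑ ω : Fin K → Fin n, ∑ i, φ (sgdRun g η x0 K ω - η • g i (sgdRun g η x0 K ω)) := by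
  rw [← (Fin.snocEquiv fun _ => Fin n).sum_comp, Fintype.sum_prod_type, Finset.sum_comm]
  simp [sgdRun, Fin.snocEquiv]

theorem sum_sgdRun_le_pow {V : EuclideanSpace ℝ (Fin d) → ℝ} {c : ℝ} (hc : 0 ≤ c)
    (hstep : ∀ x, ∑ i, V (x - η • g i x) ≤ c * V x) (K : ℕ) :
    ∑ ω : Fin K → Fin n, V (sgdRun g η x0 K ω) ≤ c ^ K * V x0 := by
  induction K with
  | zero => simp [sgdRun]
  | succ K ih =>
    calc ∑ ω : Fin (K + 1) → Fin n, V (sgdRun g η x0 (K + 1) ω)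
        ≤ ∑ ω : Fin K → Fin n, c * V (sgdRun g η x0 K ω) := by
          rw [sum_sgdRun_succ]; exact Finset.sum_le_sum fun ω _ => hstep _
      _ ≤ c * (c ^ K * V x0) := by rw [← Finset.mul_sum]; gcongr
      _ = c ^ (K + 1) * V x0 := by ring

end SGD

theorem sgd_pl_wgc_linear_rate_general
    (d n : ℕ) (hn : 0 < n)
    (f : Fin n → EuclideanSpace ℝ (Fin d) → ℝ)
    (hdiff : ∀ i, Differentiable ℝ (f i))
    (F : EuclideanSpace ℝ (Fin d) → ℝ)
    (hF : F = fun x => (n : ℝ)⁻¹ * ∑ i, f i x)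
    (L μ α : ℝ) (hL : 0 < L) (hμ : 0 < μ) (hμL : μ ≤ L) (hα : μ / L ≤ α)
    (hsmooth : ∀ x y : EuclideanSpace ℝ (Fin d),
      ‖gradient F x - gradient F y‖ ≤ L * ‖x - y‖)
    (xstar : EuclideanSpace ℝ (Fin d))
    (hPL : ∀ x, F x - F xstar ≤ 1 / (2 * μ) * ‖gradient F x‖ ^ 2)
    (hWGC : ∀ x, (n : ℝ)⁻¹ * ∑ i, ‖gradient (f i) x‖ ^ 2
      ≤ 2 * α * L * (F x - F xstar))
    (η : ℝ) (hη : η = μ / (L ^ 2 * α))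
    (x0 : EuclideanSpace ℝ (Fin d)) (K : ℕ) :
    ((n : ℝ) ^ K)⁻¹ *
        ∑ ω : Fin K → Fin n,
          (F (sgdRun (fun i => gradient (f i)) η x0 K ω) - F xstar)
      ≤ (1 - μ ^ 2 / (L ^ 2 * α)) ^ K * (F x0 - F xstar) := by
  have hnR : (0 : ℝ) < n := Nat.cast_pos.2 hn
  have hα0 : 0 < α := (div_pos hμ hL).trans_le hα
  have hη0 : 0 ≤ η := by rw [hη]; positivity
  have hρ : 0 ≤ 1 - μ ^ 2 / (L ^ 2 * α) := by
    rw [sub_nonneg, div_le_one (by positivity)]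
    nlinarith [(div_le_iff₀ hL).1 hα]
  have hrate : 1 - 2 * μ * η + α * L ^ 2 * η ^ 2 = 1 - μ ^ 2 / (L ^ 2 * α) := by
    rw [hη]; field_simp; ring
  have hFdiff : Differentiable ℝ F := hF ▸ (Differentiable.fun_sum fun i _ => hdiff i).const_mul _
  have hmean : ∀ x, ∑ i, gradient (f i) x = (n : ℝ) • gradient F x := fun x => by
    rw [hF, gradient_const_mul_sum (fun i => hdiff i x), smul_inv_smul₀ hnR.ne']
  have hstep : ∀ x, ∑ i, (F (x - η • gradient (f i) x) - F xstar)
      ≤ n * (1 - μ ^ 2 / (L ^ 2 * α)) * (F x - F xstar) := by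
    intro x
    have h := sum_sub_le_of_pl_of_weak_growth (g := fun i => gradient (f i) x) hFdiff hL.le hμ
      hη0 hsmooth (by rw [Fintype.card_fin]; exact hmean x) (hPL x)
      (by rw [Fintype.card_fin]; exact (inv_mul_le_iff₀ hnR).1 (hWGC x))
    rwa [Fintype.card_fin, hrate] at h
  calc ((n : ℝ) ^ K)⁻¹ * ∑ ω : Fin K → Fin n,
        (F (sgdRun (fun i => gradient (f i)) η x0 K ω) - F xstar)
      ≤ ((n : ℝ) ^ K)⁻¹ * ((n * (1 - μ ^ 2 / (L ^ 2 * α))) ^ K * (F x0 - F xstar)) := by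
        gcongr
        exact sum_sgdRun_le_pow (V := fun x => F x - F xstar) _ η x0 (mul_nonneg hnR.le hρ) hstep K
    _ = (1 - μ ^ 2 / (L ^ 2 * α)) ^ K * (F x0 - F xstar) := by
        rw [mul_pow, ← mul_assoc, ← mul_assoc, inv_mul_cancel₀ (by positivity), one_mul]

/-- Linear convergence of SGD for `μ`-PL functions under the weak growth
condition, with step size `η = μ / (L² α)`.  The expectation is over the
i.i.d. uniform index sequence. -/
theorem sgd_pl_wgc_linear_rate
    (d n : ℕ) (hn : 0 < n)
    (f : Fin n → EuclideanSpace ℝ (Fin d) → ℝ)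
    (hdiff : ∀ i, Differentiable ℝ (f i))
    (F : EuclideanSpace ℝ (Fin d) → ℝ)
    (hF : F = fun x => (n : ℝ)⁻¹ * ∑ i, f i x)
    (L μ α : ℝ) (hL : 0 < L) (hμ : 0 < μ) (hμL : μ ≤ L) (hα : μ / L ≤ α)
    (hsmooth : ∀ x y : EuclideanSpace ℝ (Fin d),
      ‖gradient F x - gradient F y‖ ≤ L * ‖x - y‖)
    (xstar : EuclideanSpace ℝ (Fin d))
    (hmin : ∀ x, F xstar ≤ F x)
    (hPL : ∀ x, F x - F xstar ≤ 1 / (2 * μ) * ‖gradient F x‖ ^ 2)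
    (hWGC : ∀ x, (n : ℝ)⁻¹ * ∑ i, ‖gradient (f i) x‖ ^ 2
      ≤ 2 * α * L * (F x - F xstar))
    (η : ℝ) (hη : η = μ / (L ^ 2 * α))
    (x0 : EuclideanSpace ℝ (Fin d)) (K : ℕ) :
    ((n : ℝ) ^ K)⁻¹ *
        ∑ ω : Fin K → Fin n,
          (F (sgdRun (fun i => gradient (f i)) η x0 K ω) - F xstar)
      ≤ (1 - μ ^ 2 / (L ^ 2 * α)) ^ K * (F x0 - F xstar) :=
  sgd_pl_wgc_linear_rate_general d n hn f hdiff F hF L μ α hL hμ hμL hα hsmooth xstar hPL hWGC η hη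
    x0 K
end
end

section
/- Within-epoch deviation bound for the incremental gradient method: suppose each $f_i$ is $L_i$-smooth with $L_{\max} = \max_i L_i$, and the iterates satisfy $x_{j+1} = x_j - \eta \nabla f_{j+1}(x_j)$ for $j = 0,\ldots,n-1$ starting from $x_0$. If $\eta \leq \frac{1}{\sqrt{2} n L_{\max}}$, then $\sum_{i=0}^{n-1}\|x_i - x_0\|^2 \leq 2\eta^2 n^3 \cdot \frac{1}{n}\sum_{i=0}^{n-1}\|\nabla f_{i+1}(x_0)\|^2$. -/
/-! With `a i = ‖x i - x 0‖`, the triangle inequality along the trajectory and smoothness give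
`a i ≤ η ∑_{j<i} (L a j + ‖∇f_{j+1}(x 0)‖)`. Squaring with Cauchy–Schwarz and summing over `i < n`
(using `∑_{i<n} i ≤ n²/2`) bounds `∑ a i²` by `η²n²L² ∑ a i² + η²n² ∑ ‖∇f_{j+1}(x 0)‖²`; the step
size makes the first coefficient at most `1/2`, so that term is absorbed on the left. -/

open Finset

theorem norm_sub_le_mul_sum_of_steps {E : Type*} [SeminormedAddCommGroup E] [NormedSpace ℝ E]
    {x : ℕ → E} {g : ℕ → E → E} {η L : ℝ} {n : ℕ} (hη : 0 ≤ η)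
    (hg : ∀ j < n, ∀ y z, ‖g j y - g j z‖ ≤ L * ‖y - z‖)
    (hstep : ∀ j < n, x (j + 1) = x j - η • g j (x j)) {i : ℕ} (hi : i ≤ n) :
    ‖x i - x 0‖ ≤ η * ∑ j ∈ range i, (L * ‖x j - x 0‖ + ‖g j (x 0)‖) := by
  rw [← dist_eq_norm, dist_comm, mul_sum]
  refine (dist_le_range_sum_dist x i).trans (sum_le_sum fun j hj => ?_)
  have hjn : j < n := (mem_range.mp hj).trans_le hi
  rw [hstep j hjn, dist_eq_norm, sub_sub_cancel, norm_smul, Real.norm_of_nonneg hη]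
  gcongr
  calc ‖g j (x j)‖ ≤ ‖g j (x j) - g j (x 0)‖ + ‖g j (x 0)‖ := norm_le_norm_sub_add _ _
    _ ≤ L * ‖x j - x 0‖ + ‖g j (x 0)‖ := by gcongr; exact hg j hjn _ _

theorem sum_range_cast_le_sq_div_two (n : ℕ) : ∑ i ∈ range n, (i : ℝ) ≤ n ^ 2 / 2 := by
  have h : (∑ i ∈ range n, i) * 2 ≤ n * n := by
    rw [sum_range_id_mul_two]
    exact Nat.mul_le_mul_left n (Nat.sub_le n 1)
  have h' : ((∑ i ∈ range n, i : ℕ) : ℝ) * 2 ≤ n * n := by exact_mod_cast h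
  rw [Nat.cast_sum] at h'
  linarith

theorem sum_range_sq_le_of_le_mul_sum {n : ℕ} {a c : ℕ → ℝ} {η L : ℝ}
    (ha0 : ∀ i < n, 0 ≤ a i) (ha : ∀ i < n, a i ≤ η * ∑ j ∈ range i, (L * a j + c j))
    (hηnL : 2 * (η * (n * L)) ^ 2 ≤ 1) :
    ∑ i ∈ range n, a i ^ 2 ≤ 2 * η ^ 2 * n ^ 2 * ∑ i ∈ range n, c i ^ 2 := by
  set S := ∑ i ∈ range n, a i ^ 2
  set C := ∑ i ∈ range n, c i ^ 2
  set U := ∑ j ∈ range n, (L * a j + c j) ^ 2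
  have hS0 : 0 ≤ S := sum_nonneg fun _ _ => sq_nonneg _
  have hpoint : ∀ i < n, a i ^ 2 ≤ η ^ 2 * i * U := fun i hi =>
    calc a i ^ 2 ≤ (η * ∑ j ∈ range i, (L * a j + c j)) ^ 2 :=
          pow_le_pow_left₀ (ha0 i hi) (ha i hi) 2
      _ = η ^ 2 * (∑ j ∈ range i, (L * a j + c j)) ^ 2 := mul_pow _ _ _
      _ ≤ η ^ 2 * (i * ∑ j ∈ range i, (L * a j + c j) ^ 2) := by
        gcongr; simpa using sq_sum_le_card_mul_sum_sq (s := range i) (f := fun j => L * a j + c j)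
      _ ≤ η ^ 2 * i * U := by
        rw [← mul_assoc]
        gcongr
        exact sum_le_sum_of_subset_of_nonneg (range_subset_range.mpr hi.le) fun _ _ _ => sq_nonneg _
  have hU : U ≤ 2 * (L ^ 2 * S + C) :=
    calc U ≤ ∑ j ∈ range n, 2 * ((L * a j) ^ 2 + c j ^ 2) := sum_le_sum fun _ _ => add_sq_le
      _ = 2 * (L ^ 2 * S + C) := by simp only [← mul_sum, sum_add_distrib, mul_pow]; rfl
  have hS : S ≤ (η * (n * L)) ^ 2 * S + η ^ 2 * n ^ 2 * C :=
    calc S ≤ ∑ i ∈ range n, η ^ 2 * i * U := sum_le_sum fun i hi => hpoint i (mem_range.mp hi)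
      _ = η ^ 2 * (∑ i ∈ range n, (i : ℝ)) * U := by rw [← sum_mul, ← mul_sum]
      _ ≤ η ^ 2 * (n ^ 2 / 2) * (2 * (L ^ 2 * S + C)) := by
        gcongr
        exact sum_range_cast_le_sq_div_two n
      _ = (η * (n * L)) ^ 2 * S + η ^ 2 * n ^ 2 * C := by ring
  linarith [mul_le_mul_of_nonneg_right hηnL hS0]

theorem two_mul_sq_mul_le_one {η b : ℝ} (hη0 : 0 < η) (hη : η ≤ 1 / (√2 * b)) :
    2 * (η * b) ^ 2 ≤ 1 := by
  have hb : 0 < √2 * b := one_div_pos.mp (hη0.trans_le hη)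
  have h : η * (√2 * b) ≤ 1 := by rwa [← le_div_iff₀ hb]
  calc 2 * (η * b) ^ 2 = (η * (√2 * b)) ^ 2 := by
        rw [mul_pow, mul_pow, mul_pow, Real.sq_sqrt zero_le_two]; ring
    _ ≤ 1 := pow_le_one₀ (by positivity) h

theorem ig_deviation_bound_general
    (d n : ℕ)
    (f : Fin n → EuclideanSpace ℝ (Fin d) → ℝ)
    (Lmax : ℝ)
    (hsmooth_i : ∀ i, ∀ x y : EuclideanSpace ℝ (Fin d),
      ‖gradient (f i) x - gradient (f i) y‖ ≤ Lmax * ‖x - y‖)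
    (η : ℝ) (hη0 : 0 < η) (hη : η ≤ 1 / (Real.sqrt 2 * n * Lmax))
    (x : ℕ → EuclideanSpace ℝ (Fin d))
    (hstep : ∀ j (h : j < n), x (j + 1) = x j - η • gradient (f ⟨j, h⟩) (x j)) :
    ∑ i ∈ Finset.range n, ‖x i - x 0‖ ^ 2
      ≤ 2 * η ^ 2 * n ^ 3 * ((n : ℝ)⁻¹ * ∑ i : Fin n, ‖gradient (f i) (x 0)‖ ^ 2) := by
  set g : ℕ → EuclideanSpace ℝ (Fin d) → EuclideanSpace ℝ (Fin d) :=
    fun j => if h : j < n then gradient (f ⟨j, h⟩) else 0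
  have hg : ∀ j (h : j < n), g j = gradient (f ⟨j, h⟩) := fun j h => dif_pos h
  have hdev : ∀ i < n, ‖x i - x 0‖ ≤ η * ∑ j ∈ range i, (Lmax * ‖x j - x 0‖ + ‖g j (x 0)‖) :=
    fun i hi => norm_sub_le_mul_sum_of_steps hη0.le
      (fun j hj => by rw [hg j hj]; exact hsmooth_i _)
      (fun j hj => by rw [hg j hj]; exact hstep j hj) hi.le
  have hgrad : ∑ i : Fin n, ‖gradient (f i) (x 0)‖ ^ 2 = ∑ j ∈ range n, ‖g j (x 0)‖ ^ 2 := by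
    rw [← Fin.sum_univ_eq_sum_range (fun j => ‖g j (x 0)‖ ^ 2)]
    simp only [hg _ (Fin.isLt _), Fin.eta]
  have hηnL : 2 * (η * (n * Lmax)) ^ 2 ≤ 1 := two_mul_sq_mul_le_one hη0 (by rwa [← mul_assoc])
  calc ∑ i ∈ range n, ‖x i - x 0‖ ^ 2
      ≤ 2 * η ^ 2 * n ^ 2 * ∑ j ∈ range n, ‖g j (x 0)‖ ^ 2 :=
        sum_range_sq_le_of_le_mul_sum (fun _ _ => norm_nonneg _) hdev hηnL
    _ = 2 * η ^ 2 * n ^ 3 * ((n : ℝ)⁻¹ * ∑ i : Fin n, ‖gradient (f i) (x 0)‖ ^ 2) := by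
        rw [hgrad]
        field_simp

/-- Within-epoch deviation bound for the incremental gradient method:
with step size `η ≤ 1/(√2 n L_max)`, the sum of squared deviations from the
epoch's starting point is controlled by the gradients at the starting point. -/
theorem ig_deviation_bound
    (d n : ℕ) (hn : 0 < n)
    (f : Fin n → EuclideanSpace ℝ (Fin d) → ℝ)
    (hdiff : ∀ i, Differentiable ℝ (f i))
    (Lmax : ℝ) (hLmax : 0 < Lmax)
    (hsmooth_i : ∀ i, ∀ x y : EuclideanSpace ℝ (Fin d),
      ‖gradient (f i) x - gradient (f i) y‖ ≤ Lmax * ‖x - y‖)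
    (η : ℝ) (hη0 : 0 < η) (hη : η ≤ 1 / (Real.sqrt 2 * n * Lmax))
    (x : ℕ → EuclideanSpace ℝ (Fin d))
    (hstep : ∀ j (h : j < n), x (j + 1) = x j - η • gradient (f ⟨j, h⟩) (x j)) :
    ∑ i ∈ Finset.range n, ‖x i - x 0‖ ^ 2
      ≤ 2 * η ^ 2 * n ^ 3 * ((n : ℝ)⁻¹ * ∑ i : Fin n, ‖gradient (f i) (x 0)‖ ^ 2) :=
  ig_deviation_bound_general d n f Lmax hsmooth_i η hη0 hη x hstep
end

section
/- Incremental gradient deviation bound under relaxed SGC: suppose each $f_i$ is $L_i$-smooth with $L_{\max} = \max_i L_i$, and suppose $\frac{1}{n}\sum_{i=1}^n\|\nabla f_i(x)\|^2 \leq \rho\|\nabla f(x)\|^2 + \sigma^2$ for all $x$, where $f = \frac{1}{n}\sum_i f_i$. For one epoch of the incremental gradient method $x_{j+1} = x_j - \eta \nabla f_{j+1}(x_j)$, $j = 0,\ldots,n-1$, with $\eta \leq \frac{1}{\sqrt{2} n L_{\max}}$: $\sum_{i=0}^{n-1}\|x_i - x_0\|^2 \leq 2\eta^2 n^3 \rho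 \|\nabla f(x_0)\|^2 + 2\eta^2 n^3 \sigma^2$. -/
noncomputable section

set_option maxHeartbeats 1000000 in
/-- Incremental gradient within-epoch deviation bound under the relaxed strong
growth condition. -/
theorem ig_deviation_bound_relaxed_sgc
    (d n : ℕ) (hn : 0 < n)
    (f : Fin n → EuclideanSpace ℝ (Fin d) → ℝ)
    (hdiff : ∀ i, Differentiable ℝ (f i))
    (F : EuclideanSpace ℝ (Fin d) → ℝ)
    (hF : F = fun x => (n : ℝ)⁻¹ * ∑ i, f i x)
    (Lmax : ℝ) (hLmax : 0 < Lmax)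
    (hsmooth_i : ∀ i, ∀ x y : EuclideanSpace ℝ (Fin d),
      ‖gradient (f i) x - gradient (f i) y‖ ≤ Lmax * ‖x - y‖)
    (ρ σ : ℝ) (hρ : 0 ≤ ρ) (hσ : 0 ≤ σ)
    (hSGC : ∀ x, (n : ℝ)⁻¹ * ∑ i, ‖gradient (f i) x‖ ^ 2
      ≤ ρ * ‖gradient F x‖ ^ 2 + σ ^ 2)
    (η : ℝ) (hη0 : 0 < η) (hη : η ≤ 1 / (Real.sqrt 2 * n * Lmax))
    (x : ℕ → EuclideanSpace ℝ (Fin d))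
    (hstep : ∀ j (h : j < n), x (j + 1) = x j - η • gradient (f ⟨j, h⟩) (x j)) :
    ∑ i ∈ Finset.range n, ‖x i - x 0‖ ^ 2
      ≤ 2 * η ^ 2 * n ^ 3 * ρ * ‖gradient F (x 0)‖ ^ 2
        + 2 * η ^ 2 * n ^ 3 * σ ^ 2 := by
  -- gradients along the trajectory and at the start, extended by 0
  set g : ℕ → EuclideanSpace ℝ (Fin d) := fun j => if h : j < n then gradient (f ⟨j, h⟩) (x j) else 0 with hg
  set g0 : ℕ → EuclideanSpace ℝ (Fin d) := fun j => if h : j < n then gradient (f ⟨j, h⟩) (x 0) else 0 with hg0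
  set S : ℝ := ∑ i ∈ Finset.range n, ‖x i - x 0‖ ^ 2 with hSdef
  set G : ℝ := ∑ j ∈ Finset.range n, ‖g0 j‖ ^ 2 with hGdef
  have hS0 : 0 ≤ S := Finset.sum_nonneg fun i _ => by positivity
  have hG0 : 0 ≤ G := Finset.sum_nonneg fun i _ => by positivity
  -- step bound on η
  have hden : 0 < Real.sqrt 2 * n * Lmax := by
    have : (0:ℝ) < Real.sqrt 2 := Real.sqrt_pos.mpr (by norm_num)
    have hn' : (0:ℝ) < n := by exact_mod_cast hn
    positivity
  have hη2 : 2 * η ^ 2 * (n:ℝ) ^ 2 * Lmax ^ 2 ≤ 1 := by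
    have h1 : η * (Real.sqrt 2 * n * Lmax) ≤ 1 := by
      rw [← le_div_iff₀ hden]; exact hη
    have h2 : (Real.sqrt 2) ^ 2 = 2 := Real.sq_sqrt (by norm_num)
    nlinarith [mul_pos hη0 hden, sq_nonneg (η * (Real.sqrt 2 * n * Lmax))]
  -- deviation as accumulated gradients
  have key1 : ∀ i ≤ n, ‖x i - x 0‖ ≤ η * ∑ j ∈ Finset.range i, ‖g j‖ := by
    intro i hi
    induction i with
    | zero => simp
    | succ k ih =>
      have hk : k < n := Nat.lt_of_succ_le hi
      have hx : x (k + 1) = x k - η • g k := by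
        rw [hstep k hk]; simp [hg, dif_pos hk]
      calc ‖x (k + 1) - x 0‖ = ‖(x k - x 0) - η • g k‖ := by
            rw [hx]; congr 1; abel
        _ ≤ ‖x k - x 0‖ + ‖η • g k‖ := norm_sub_le _ _
        _ ≤ η * ∑ j ∈ Finset.range k, ‖g j‖ + η * ‖g k‖ := by
            rw [norm_smul, Real.norm_eq_abs, abs_of_pos hη0]
            exact add_le_add (ih (le_of_lt hk)) le_rfl
        _ = η * ∑ j ∈ Finset.range (k + 1), ‖g j‖ := by
            rw [Finset.sum_range_succ]; ring
  -- smoothness comparison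
  have key2 : ∀ j < n, ‖g j‖ ≤ ‖g0 j‖ + Lmax * ‖x j - x 0‖ := by
    intro j hj
    have h := hsmooth_i ⟨j, hj⟩ (x j) (x 0)
    have : ‖g j - g0 j‖ ≤ Lmax * ‖x j - x 0‖ := by
      simpa [hg, hg0, dif_pos hj] using h
    calc ‖g j‖ = ‖g0 j + (g j - g0 j)‖ := by congr 1; abel
      _ ≤ ‖g0 j‖ + ‖g j - g0 j‖ := norm_add_le _ _
      _ ≤ ‖g0 j‖ + Lmax * ‖x j - x 0‖ := by linarith
  -- per-iterate squared bound
  have hDi : ∀ i < n, ‖x i - x 0‖ ^ 2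
      ≤ 2 * η ^ 2 * i * (G + Lmax ^ 2 * S) := by
    intro i hi
    have h1 := key1 i (le_of_lt hi)
    have hsum0 : 0 ≤ ∑ j ∈ Finset.range i, ‖g j‖ :=
      Finset.sum_nonneg fun j _ => norm_nonneg _
    have hsq : ‖x i - x 0‖ ^ 2 ≤ η ^ 2 * (∑ j ∈ Finset.range i, ‖g j‖) ^ 2 := by
      have := mul_self_le_mul_self (norm_nonneg (x i - x 0)) h1
      nlinarith
    have hCS : (∑ j ∈ Finset.range i, ‖g j‖) ^ 2
        ≤ (i : ℝ) * ∑ j ∈ Finset.range i, ‖g j‖ ^ 2 := by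
      have := sq_sum_le_card_mul_sum_sq (s := Finset.range i) (f := fun j => ‖g j‖)
      simpa using this
    have hpt : ∑ j ∈ Finset.range i, ‖g j‖ ^ 2
        ≤ ∑ j ∈ Finset.range i, (2 * ‖g0 j‖ ^ 2 + 2 * Lmax ^ 2 * ‖x j - x 0‖ ^ 2) := by
      apply Finset.sum_le_sum
      intro j hj
      have hjn : j < n := lt_trans (Finset.mem_range.mp hj) hi
      have h2 := key2 j hjn
      nlinarith [norm_nonneg (g j), norm_nonneg (g0 j), norm_nonneg (x j - x 0),
        mul_nonneg hLmax.le (norm_nonneg (x j - x 0)),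
        sq_nonneg (‖g0 j‖ - Lmax * ‖x j - x 0‖)]
    have hsplit : ∑ j ∈ Finset.range i, (2 * ‖g0 j‖ ^ 2 + 2 * Lmax ^ 2 * ‖x j - x 0‖ ^ 2)
        ≤ 2 * G + 2 * Lmax ^ 2 * S := by
      rw [Finset.sum_add_distrib, ← Finset.mul_sum, ← Finset.mul_sum]
      have hsub : Finset.range i ⊆ Finset.range n :=
        Finset.range_subset_range.mpr (le_of_lt hi)
      have e1 : ∑ j ∈ Finset.range i, ‖g0 j‖ ^ 2 ≤ G :=
        Finset.sum_le_sum_of_subset_of_nonneg hsub fun j _ _ => by positivity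
      have e2 : ∑ j ∈ Finset.range i, ‖x j - x 0‖ ^ 2 ≤ S :=
        Finset.sum_le_sum_of_subset_of_nonneg hsub fun j _ _ => by positivity
      have hL2 : (0:ℝ) ≤ 2 * Lmax ^ 2 := by positivity
      nlinarith
    have hi1 : (1:ℝ) ≤ (i:ℝ) ∨ (i:ℝ) = 0 := by
      rcases Nat.eq_zero_or_pos i with h | h
      · right; exact_mod_cast h
      · left; exact_mod_cast h
    have hiR : (0:ℝ) ≤ (i:ℝ) := Nat.cast_nonneg i
    calc ‖x i - x 0‖ ^ 2 ≤ η ^ 2 * (∑ j ∈ Finset.range i, ‖g j‖) ^ 2 := hsq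
      _ ≤ η ^ 2 * ((i : ℝ) * ∑ j ∈ Finset.range i, ‖g j‖ ^ 2) := by
          apply mul_le_mul_of_nonneg_left hCS (by positivity)
      _ ≤ η ^ 2 * ((i : ℝ) * (2 * G + 2 * Lmax ^ 2 * S)) := by
          apply mul_le_mul_of_nonneg_left _ (by positivity)
          apply mul_le_mul_of_nonneg_left _ hiR
          exact le_trans hpt hsplit
      _ = 2 * η ^ 2 * i * (G + Lmax ^ 2 * S) := by ring
  -- sum up
  have hT0 : 0 ≤ G + Lmax ^ 2 * S := by positivity
  have hsumS : S ≤ 2 * η ^ 2 * (G + Lmax ^ 2 * S) * ∑ i ∈ Finset.range n, (i : ℝ) := by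
    rw [hSdef, Finset.mul_sum]
    apply Finset.sum_le_sum
    intro i hi
    have := hDi i (Finset.mem_range.mp hi)
    linarith [this]
  have hgauss : ∑ i ∈ Finset.range n, (i : ℝ) ≤ (n : ℝ) ^ 2 / 2 := by
    have h := Finset.sum_range_id_mul_two n
    have h' : ((∑ i ∈ Finset.range n, i : ℕ) : ℝ) * 2 = (n : ℝ) * ((n : ℝ) - 1) := by
      have hc : ((n * (n - 1) : ℕ) : ℝ) = (n : ℝ) * ((n : ℝ) - 1) := by
        rcases Nat.exists_eq_succ_of_ne_zero hn.ne' with ⟨m, rfl⟩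
        push_cast [Nat.succ_sub_one]; ring
      rw [← hc]; exact_mod_cast congrArg (Nat.cast : ℕ → ℝ) h
    have hcast : (∑ i ∈ Finset.range n, (i : ℝ)) = ((∑ i ∈ Finset.range n, i : ℕ) : ℝ) := by
      push_cast; ring
    have hn' : (0:ℝ) < (n:ℝ) := by exact_mod_cast hn
    nlinarith
  have hS2 : S ≤ η ^ 2 * (n : ℝ) ^ 2 * (G + Lmax ^ 2 * S) := by
    have h2 : 2 * η ^ 2 * (G + Lmax ^ 2 * S) * (∑ i ∈ Finset.range n, (i : ℝ))
        ≤ 2 * η ^ 2 * (G + Lmax ^ 2 * S) * ((n : ℝ) ^ 2 / 2) := by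
      apply mul_le_mul_of_nonneg_left hgauss (by positivity)
    calc S ≤ _ := hsumS
      _ ≤ 2 * η ^ 2 * (G + Lmax ^ 2 * S) * ((n : ℝ) ^ 2 / 2) := h2
      _ = η ^ 2 * (n : ℝ) ^ 2 * (G + Lmax ^ 2 * S) := by ring
  -- solve for S
  have hSmain : S ≤ 2 * η ^ 2 * (n : ℝ) ^ 2 * G := by
    nlinarith [hη2, hS0, hG0, sq_nonneg η, sq_nonneg (n:ℝ)]
  -- relate G to the SGC at x 0
  have hGfin : G = ∑ i : Fin n, ‖gradient (f i) (x 0)‖ ^ 2 := by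
    rw [hGdef, ← Fin.sum_univ_eq_sum_range (fun j => ‖g0 j‖ ^ 2) n]
    apply Finset.sum_congr rfl
    intro i _
    simp [hg0, i.isLt]
  have hGbound : G ≤ (n : ℝ) * (ρ * ‖gradient F (x 0)‖ ^ 2 + σ ^ 2) := by
    have h := hSGC (x 0)
    have hn' : (0:ℝ) < (n:ℝ) := by exact_mod_cast hn
    have : G = (n : ℝ) * ((n : ℝ)⁻¹ * ∑ i, ‖gradient (f i) (x 0)‖ ^ 2) := by
      rw [hGfin]; field_simp
    rw [this]
    exact mul_le_mul_of_nonneg_left h hn'.le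
  have hn' : (0:ℝ) < (n:ℝ) := by exact_mod_cast hn
  calc S ≤ 2 * η ^ 2 * (n : ℝ) ^ 2 * G := hSmain
    _ ≤ 2 * η ^ 2 * (n : ℝ) ^ 2 * ((n : ℝ) * (ρ * ‖gradient F (x 0)‖ ^ 2 + σ ^ 2)) := by
        apply mul_le_mul_of_nonneg_left hGbound (by positivity)
    _ = 2 * η ^ 2 * (n:ℝ) ^ 3 * ρ * ‖gradient F (x 0)‖ ^ 2
        + 2 * η ^ 2 * (n:ℝ) ^ 3 * σ ^ 2 := by ring
end
end

section
/- Epoch-level contraction for RR under PL and SGC (noiseless case): suppose $f = \frac{1}{n}\sum_i f_i$ is $L$-smooth, $\mu$-PL with minimum $f(x^*)$, each $f_i$ is $L_{\max}$-smooth, and the SGC holds: $\frac{1}{n}\sum_i\|\nabla f_i(x)\|^2 \leq \rho\|\nabla f(x)\|^2$. Let one epoch of random reshuffling start at $x_0$ and end at $x_n$, with step size $\eta \leq \min\{\frac{1}{2nL_{\max}}, \frac{1}{2\sqrt{2}L_{\max}\sqrt{n\rho}}\}$. Then $\mathbb{E}[f(x_n)] - f(x^*) \leq \left(1 - \frac{n\mu\eta}{4}\right)(f(x_0)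 - f(x^*))$, where the expectation is over the random permutation. -/
/-!
Write `Sⱼ` for the sum of the first `j` sampled component gradients, all taken at `x₀`.
Within the epoch `xⱼ - x₀` differs from `-η Sⱼ` by at most `η Lmax ∑_{k<j} ‖xₖ - x₀‖`; since
`n η Lmax ≤ 1/2`, this discrete Grönwall inequality gives
`∑_{j<n} ‖xⱼ - x₀‖² ≤ 4 η² ∑_{j<n} ‖Sⱼ‖²`. Under a uniform permutation `Sⱼ` is a sum of `j`
components sampled without replacement, and the strong growth condition bounds its second
moment by `(ρ + n) j ‖∇F(x₀)‖²`. The whole epoch is one inexact gradient step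
`x₀ - η (n ∇F(x₀) + e)` with `‖e‖ ≤ Lmax ∑ⱼ ‖xⱼ - x₀‖`, so the descent lemma and these bounds
give `E F(xₙ) ≤ F(x₀) - (n η / 8) ‖∇F(x₀)‖²`; the PL inequality finishes.
-/

noncomputable section

/-- One epoch of (re)shuffled incremental updates: starting from `x0`, the
iterate after `j` steps using the sample order given by the permutation `π`,
gradient oracle `g` and step size `η`. -/
def epochIter {d n : ℕ}
    (g : Fin n → EuclideanSpace ℝ (Fin d) → EuclideanSpace ℝ (Fin d))
    (η : ℝ) (x0 : EuclideanSpace ℝ (Fin d)) (π : Equiv.Perm (Fin n)) :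
    ℕ → EuclideanSpace ℝ (Fin d)
  | 0 => x0
  | j + 1 =>
      if h : j < n then
        epochIter g η x0 π j - η • g (π ⟨j, h⟩) (epochIter g η x0 π j)
      else epochIter g η x0 π j

open Finset
open scoped RealInnerProductSpace

section Smooth

variable {E : Type*} [NormedAddCommGroup E] [InnerProductSpace ℝ E] [CompleteSpace E]

theorem hasDerivAt_comp_add_smul {f : E → ℝ} (hf : Differentiable ℝ f) (x v : E) (t : ℝ) :
    HasDerivAt (fun s : ℝ => f (x + s • v)) ⟪gradient f (x + t • v), v⟫ t := by
  have hline : HasDerivAt (fun s : ℝ => x + s • v) v t := by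
    simpa using ((hasDerivAt_id t).smul_const v).const_add x
  exact (hf _).hasGradientAt.hasFDerivAt.comp_hasDerivAt t hline

theorem apply_le_add_inner_add_sq_of_lipschitz_gradient {f : E → ℝ} (hf : Differentiable ℝ f)
    {L : ℝ} (hL : ∀ x y, ‖gradient f x - gradient f y‖ ≤ L * ‖x - y‖) (x y : E) :
    f y ≤ f x + ⟪gradient f x, y - x⟫ + L / 2 * ‖y - x‖ ^ 2 := by
  set v := y - x
  -- The gap between the quadratic model and `f` along the segment is monotone and starts at `0`.
  let φ : ℝ → ℝ := fun t =>
    f x + t * ⟪gradient f x, v⟫ + L / 2 * (t ^ 2 * ‖v‖ ^ 2) - f (x + t • v)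
  have hφ : ∀ t, HasDerivAt φ
      (⟪gradient f x, v⟫ + L / 2 * (2 * t * ‖v‖ ^ 2) - ⟪gradient f (x + t • v), v⟫) t := by
    intro t
    have hquad : HasDerivAt (fun t : ℝ => t ^ 2 * ‖v‖ ^ 2) (2 * t * ‖v‖ ^ 2) t := by
      simpa using (hasDerivAt_pow 2 t).mul_const (‖v‖ ^ 2)
    exact ((((hasDerivAt_id t).mul_const _).const_add (f x)).add (hquad.const_mul (L / 2))).sub
      (hasDerivAt_comp_add_smul hf x v t) |>.congr_deriv (by simp)
  have hmono : MonotoneOn φ (Set.Icc 0 1) := by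
    refine monotoneOn_of_hasDerivWithinAt_nonneg (convex_Icc 0 1)
      (fun t _ => (hφ t).continuousAt.continuousWithinAt)
      (fun t _ => (hφ t).hasDerivWithinAt) ?_
    intro t ht
    rw [interior_Icc] at ht
    have hgrad : ‖gradient f (x + t • v) - gradient f x‖ ≤ L * (t * ‖v‖) := by
      simpa [norm_smul, abs_of_pos ht.1] using hL (x + t • v) x
    have hinner : ⟪gradient f (x + t • v) - gradient f x, v⟫ ≤ L * (t * ‖v‖) * ‖v‖ :=
      (real_inner_le_norm _ _).trans (mul_le_mul_of_nonneg_right hgrad (norm_nonneg v))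
    rw [inner_sub_left] at hinner
    nlinarith
  have h01 := hmono (by norm_num : (0 : ℝ) ∈ Set.Icc (0 : ℝ) 1)
    (by norm_num : (1 : ℝ) ∈ Set.Icc (0 : ℝ) 1) zero_le_one
  simp only [φ, zero_mul, zero_pow two_ne_zero, mul_zero, add_zero, zero_smul, sub_self,
    one_mul, one_pow, one_smul, show x + v = y from add_sub_cancel x y] at h01
  linarith

theorem hasGradientAt_const_mul_sum {ι : Type*} [Fintype ι] {f : ι → E → ℝ}
    (hf : ∀ i, Differentiable ℝ (f i)) (c : ℝ) (x : E) :
    HasGradientAt (fun x => c * ∑ i, f i x) (c • ∑ i, gradient (f i) x) x := by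
  have hsum : HasFDerivAt (fun x => ∑ i, f i x)
      (∑ i, InnerProductSpace.toDual ℝ E (gradient (f i) x)) x :=
    HasFDerivAt.fun_sum fun i _ => (hf i x).hasGradientAt.hasFDerivAt
  convert (hsum.const_mul c).hasGradientAt using 1
  simp [map_sum]
  rfl

theorem apply_sub_smul_le_of_lipschitz_gradient {f : E → ℝ} (hf : Differentiable ℝ f)
    {L : ℝ} (hL : ∀ x y, ‖gradient f x - gradient f y‖ ≤ L * ‖x - y‖) {η c : ℝ}
    (hη : 0 ≤ η) (hc : 0 < c) (hηLc : η * L * c ≤ 1) (x w : E) :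
    f (x - η • w) ≤
      f x - η * c / 2 * ‖gradient f x‖ ^ 2 + η / (2 * c) * ‖w - c • gradient f x‖ ^ 2 := by
  have hdesc := apply_le_add_inner_add_sq_of_lipschitz_gradient hf hL x (x - η • w)
  rw [sub_sub_cancel_left, inner_neg_right, real_inner_smul_right, norm_neg, norm_smul,
    Real.norm_of_nonneg hη] at hdesc
  have hexpand : ‖w - c • gradient f x‖ ^ 2 =
      ‖w‖ ^ 2 - 2 * c * ⟪gradient f x, w⟫ + c ^ 2 * ‖gradient f x‖ ^ 2 := by
    rw [norm_sub_sq_real, real_inner_smul_right, norm_smul, Real.norm_of_nonneg hc.le,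
      real_inner_comm]
    ring
  have hcurv : L / 2 * (η * ‖w‖) ^ 2 ≤ η / (2 * c) * ‖w‖ ^ 2 :=
    calc L / 2 * (η * ‖w‖) ^ 2 = η / (2 * c) * ((η * L * c) * ‖w‖ ^ 2) := by
          field_simp
      _ ≤ η / (2 * c) * (1 * ‖w‖ ^ 2) := by gcongr
      _ = η / (2 * c) * ‖w‖ ^ 2 := by rw [one_mul]
  have hsplit : η / (2 * c) * ‖w - c • gradient f x‖ ^ 2 =
      η / (2 * c) * ‖w‖ ^ 2 - η * ⟪gradient f x, w⟫ + η * c / 2 * ‖gradient f x‖ ^ 2 := by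
    rw [hexpand]
    field_simp
  linarith

end Smooth

section PermutationSums

variable {α M : Type*} [Fintype α] [DecidableEq α] [AddCommMonoid M]

theorem sum_perm_apply_eq (c : α → M) (i j : α) :
    ∑ π : Equiv.Perm α, c (π i) = ∑ π : Equiv.Perm α, c (π j) := by
  rw [← Equiv.sum_comp (Equiv.mulRight (Equiv.swap i j))]
  simp [Equiv.Perm.mul_apply]

theorem card_mul_sum_perm_apply (c : α → ℝ) (i : α) :
    (Fintype.card α : ℝ) * ∑ π : Equiv.Perm α, c (π i) =
      (Fintype.card α).factorial * ∑ k, c k :=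
  calc (Fintype.card α : ℝ) * ∑ π : Equiv.Perm α, c (π i)
      = ∑ j : α, ∑ π : Equiv.Perm α, c (π j) := by
        rw [Finset.sum_congr rfl fun j _ => sum_perm_apply_eq c j i, Finset.sum_const,
          Finset.card_univ, nsmul_eq_mul]
    _ = ∑ π : Equiv.Perm α, ∑ k, c k := by
        rw [Finset.sum_comm]
        exact Finset.sum_congr rfl fun π _ => Equiv.sum_comp π c
    _ = (Fintype.card α).factorial * ∑ k, c k := by
        simp [Finset.card_univ, Fintype.card_perm]

omit [Fintype α] in
theorem exists_perm_apply_eq_and_apply_eq {i i' j j' : α} (hi : i ≠ i') (hj : j ≠ j') :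
    ∃ σ : Equiv.Perm α, σ j = i ∧ σ j' = i' := by
  set τ := Equiv.swap j i
  have hτj : τ j = i := Equiv.swap_apply_left j i
  have hτj' : τ j' ≠ i := fun h => hj (τ.injective (h.trans hτj.symm)).symm
  refine ⟨τ.trans (Equiv.swap (τ j') i'), ?_, Equiv.swap_apply_left _ _⟩
  rw [Equiv.trans_apply, hτj]
  exact Equiv.swap_apply_of_ne_of_ne hτj'.symm hi

theorem sum_perm_apply₂_eq (H : α → α → M) {i i' j j' : α} (hi : i ≠ i') (hj : j ≠ j') :
    ∑ π : Equiv.Perm α, H (π i) (π i') = ∑ π : Equiv.Perm α, H (π j) (π j') := by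
  obtain ⟨σ, hσj, hσj'⟩ := exists_perm_apply_eq_and_apply_eq hi hj
  rw [← Equiv.sum_comp (Equiv.mulRight σ) fun π => H (π j) (π j')]
  simp [Equiv.Perm.mul_apply, hσj, hσj']

theorem card_mul_card_sub_one_mul_sum_perm_apply₂ (H : α → α → ℝ) {i i' : α} (hi : i ≠ i') :
    (Fintype.card α : ℝ) * (Fintype.card α - 1) * ∑ π : Equiv.Perm α, H (π i) (π i') =
      (Fintype.card α).factorial * (∑ k, ∑ l, H k l - ∑ k, H k k) :=
  calc (Fintype.card α : ℝ) * (Fintype.card α - 1) * ∑ π : Equiv.Perm α, H (π i) (π i')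
      = ∑ j : α, ∑ j' ∈ univ.erase j, ∑ π : Equiv.Perm α, H (π j) (π j') := by
        have hcard : ∀ j : α, (#(univ.erase j) : ℝ) = Fintype.card α - 1 := fun j => by
          rw [Finset.card_erase_of_mem (Finset.mem_univ j), Finset.card_univ,
            Nat.cast_pred (Fintype.card_pos_iff.mpr ⟨j⟩)]
        rw [Finset.sum_congr rfl fun j _ => Finset.sum_congr rfl fun j' hj' =>
          (sum_perm_apply₂_eq H hi (Finset.ne_of_mem_erase hj').symm).symm]
        simp only [Finset.sum_const, nsmul_eq_mul, hcard, Finset.card_univ]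
        ring
    _ = ∑ π : Equiv.Perm α, ∑ j : α, (∑ j', H (π j) (π j') - H (π j) (π j)) := by
        simp_rw [← Finset.sum_erase_eq_sub (Finset.mem_univ _)]
        rw [Finset.sum_comm]
        exact Finset.sum_congr rfl fun j _ => Finset.sum_comm
    _ = ∑ _π : Equiv.Perm α, (∑ k, ∑ l, H k l - ∑ k, H k k) := by
        refine Finset.sum_congr rfl fun π _ => ?_
        rw [Finset.sum_sub_distrib, Equiv.sum_comp π fun k => H k k,
          ← Equiv.sum_comp π fun k => ∑ l, H k l]
        simp_rw [Equiv.sum_comp π]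
    _ = (Fintype.card α).factorial * (∑ k, ∑ l, H k l - ∑ k, H k k) := by
        rw [Finset.sum_const, Finset.card_univ, Fintype.card_perm, nsmul_eq_mul]

variable {E : Type*} [NormedAddCommGroup E] [InnerProductSpace ℝ E]

theorem card_mul_card_sub_one_mul_sum_perm_norm_sq_sum (v : α → E) (A : Finset α) :
    (Fintype.card α : ℝ) * (Fintype.card α - 1) *
        ∑ π : Equiv.Perm α, ‖∑ i ∈ A, v (π i)‖ ^ 2 =
      (Fintype.card α).factorial * #A * ((Fintype.card α - 1) * ∑ k, ‖v k‖ ^ 2 +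
        (#A - 1) * (‖∑ k, v k‖ ^ 2 - ∑ k, ‖v k‖ ^ 2)) := by
  set N : ℝ := (Fintype.card α : ℝ)
  have hexpand : ∀ π : Equiv.Perm α, ‖∑ i ∈ A, v (π i)‖ ^ 2 =
      ∑ i ∈ A, (‖v (π i)‖ ^ 2 + ∑ i' ∈ A.erase i, ⟪v (π i), v (π i')⟫) := fun π => by
    rw [← real_inner_self_eq_norm_sq, sum_inner]
    refine Finset.sum_congr rfl fun i hi => ?_
    rw [inner_sum, ← Finset.add_sum_erase _ _ hi, real_inner_self_eq_norm_sq]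
  have hoff : ∑ k, ∑ l, ⟪v k, v l⟫ - ∑ k, ⟪v k, v k⟫ = ‖∑ k, v k‖ ^ 2 - ∑ k, ‖v k‖ ^ 2 := by
    simp_rw [← real_inner_self_eq_norm_sq, sum_inner, inner_sum]
  calc N * (N - 1) * ∑ π : Equiv.Perm α, ‖∑ i ∈ A, v (π i)‖ ^ 2
      = ∑ i ∈ A, ((N - 1) * (N * ∑ π : Equiv.Perm α, ‖v (π i)‖ ^ 2) + ∑ i' ∈ A.erase i,
          N * (N - 1) * ∑ π : Equiv.Perm α, ⟪v (π i), v (π i')⟫) := by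
        simp_rw [hexpand, Finset.mul_sum]
        rw [Finset.sum_comm]
        refine Finset.sum_congr rfl fun i _ => ?_
        rw [Finset.sum_comm (s := A.erase i), ← Finset.sum_add_distrib]
        refine Finset.sum_congr rfl fun π _ => ?_
        rw [← Finset.mul_sum]
        ring
    _ = ∑ i ∈ A, ((N - 1) * ((Fintype.card α).factorial * ∑ k, ‖v k‖ ^ 2) +
          ∑ _i' ∈ A.erase i, (Fintype.card α).factorial * (‖∑ k, v k‖ ^ 2 - ∑ k, ‖v k‖ ^ 2)) := by
        refine Finset.sum_congr rfl fun i _ => ?_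
        rw [card_mul_sum_perm_apply (fun k => ‖v k‖ ^ 2)]
        congr 1
        refine Finset.sum_congr rfl fun i' hi' => ?_
        rw [card_mul_card_sub_one_mul_sum_perm_apply₂ (fun k l => ⟪v k, v l⟫)
          (Finset.ne_of_mem_erase hi').symm, hoff]
    _ = _ := by
        rw [Finset.sum_congr rfl fun i hi => by
          rw [Finset.sum_const, Finset.card_erase_of_mem hi, nsmul_eq_mul,
            Nat.cast_pred (Finset.card_pos.mpr ⟨i, hi⟩)]]
        rw [Finset.sum_const, nsmul_eq_mul]
        ring

theorem sum_perm_norm_sq_sum_le {ρ : ℝ} (hα : 2 ≤ Fintype.card α) (v : α → E) (g : E)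
    (hmean : ∑ k, v k = (Fintype.card α : ℝ) • g)
    (hvar : ∑ k, ‖v k‖ ^ 2 ≤ Fintype.card α * ρ * ‖g‖ ^ 2) (A : Finset α) :
    ∑ π : Equiv.Perm α, ‖∑ i ∈ A, v (π i)‖ ^ 2 ≤
      (Fintype.card α).factorial * ((ρ + Fintype.card α) * #A * ‖g‖ ^ 2) := by
  have hid := card_mul_card_sub_one_mul_sum_perm_norm_sq_sum v A
  have hN : (2 : ℝ) ≤ Fintype.card α := by exact_mod_cast hα
  have hA : (#A : ℝ) ≤ Fintype.card α := by exact_mod_cast Finset.card_le_univ A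
  set N : ℝ := (Fintype.card α : ℝ)
  set V := ∑ k, ‖v k‖ ^ 2
  have hV : 0 ≤ V := Finset.sum_nonneg fun k _ => sq_nonneg _
  have hG : 0 ≤ ‖g‖ ^ 2 := sq_nonneg _
  have hsum : ‖∑ k, v k‖ ^ 2 = N ^ 2 * ‖g‖ ^ 2 := by
    rw [hmean, norm_smul, Real.norm_natCast, mul_pow]
  rw [hsum] at hid
  rcases (#A).eq_zero_or_pos with hA0 | hA0
  · rw [Finset.card_eq_zero.mp hA0]
    simp
  have hA1 : (1 : ℝ) ≤ #A := by exact_mod_cast hA0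
  have hbracket : (N - 1) * V + (#A - 1) * (N ^ 2 * ‖g‖ ^ 2 - V) ≤
      N * (N - 1) * ((ρ + N) * ‖g‖ ^ 2) := by
    nlinarith [mul_le_mul_of_nonneg_left hvar (by linarith : (0 : ℝ) ≤ N - #A),
      mul_le_mul_of_nonneg_left hA (by positivity : (0 : ℝ) ≤ N ^ 2 * ‖g‖ ^ 2)]
  have hfac : (0 : ℝ) < (Fintype.card α).factorial := by positivity
  have hpos : 0 < N * (N - 1) := by nlinarith
  refine le_of_mul_le_mul_left ?_ hpos
  rw [hid]
  nlinarith [mul_le_mul_of_nonneg_left hbracket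
    (by positivity : (0 : ℝ) ≤ (Fintype.card α).factorial * #A)]

end PermutationSums

theorem sum_sq_le_four_mul_sum_sq_of_le_add_mul_sum {a b : ℕ → ℝ} {q : ℝ} {n : ℕ}
    (ha : ∀ j, 0 ≤ a j) (hq : 0 ≤ q) (hqn : n * q ≤ 1 / 2)
    (hab : ∀ j < n, a j ≤ b j + q * ∑ k ∈ range j, a k) :
    ∑ j ∈ range n, a j ^ 2 ≤ 4 * ∑ j ∈ range n, b j ^ 2 := by
  set A := ∑ j ∈ range n, a j
  set T := ∑ j ∈ range n, b j
  have hA0 : 0 ≤ A := Finset.sum_nonneg fun j _ => ha j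
  have hpt : ∀ j < n, a j ≤ b j + q * A := fun j hj =>
    (hab j hj).trans <| by
      gcongr
      exact Finset.sum_le_sum_of_subset_of_nonneg (Finset.range_subset_range.mpr hj.le)
        fun k _ _ => ha k
  have hAT : A ≤ 2 * T := by
    have hsum : A ≤ T + n * q * A := by
      calc A ≤ ∑ j ∈ range n, (b j + q * A) :=
            Finset.sum_le_sum fun j hj => hpt j (Finset.mem_range.mp hj)
        _ = T + n * q * A := by
            rw [Finset.sum_add_distrib, Finset.sum_const, Finset.card_range, nsmul_eq_mul]
            ring
    nlinarith [mul_le_mul_of_nonneg_right hqn hA0]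
  have hsq : ∀ j < n, a j ^ 2 ≤ 2 * b j ^ 2 + 8 * q ^ 2 * T ^ 2 := fun j hj => by
    have h := (hpt j hj).trans (add_le_add_right (mul_le_mul_of_nonneg_left hAT hq) _)
    nlinarith [ha j, sq_nonneg (b j - 2 * q * T)]
  have hT : T ^ 2 ≤ n * ∑ j ∈ range n, b j ^ 2 := by
    simpa using sq_sum_le_card_mul_sum_sq (s := range n) (f := b)
  have hB : 0 ≤ ∑ j ∈ range n, b j ^ 2 := Finset.sum_nonneg fun j _ => sq_nonneg _
  calc ∑ j ∈ range n, a j ^ 2 ≤ ∑ j ∈ range n, (2 * b j ^ 2 + 8 * q ^ 2 * T ^ 2) :=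
        Finset.sum_le_sum fun j hj => hsq j (Finset.mem_range.mp hj)
    _ = 2 * ∑ j ∈ range n, b j ^ 2 + 8 * q ^ 2 * n * T ^ 2 := by
        rw [Finset.sum_add_distrib, Finset.sum_const, Finset.card_range, nsmul_eq_mul,
          Finset.mul_sum]
        ring
    _ ≤ 4 * ∑ j ∈ range n, b j ^ 2 := by
        have hnq : (n * q) ^ 2 ≤ 1 / 4 := by nlinarith [mul_nonneg (Nat.cast_nonneg n) hq]
        nlinarith [mul_le_mul_of_nonneg_left hT (by positivity : (0 : ℝ) ≤ 8 * q ^ 2 * n),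
          mul_le_mul_of_nonneg_right hnq hB]

theorem sq_mul_sq_mul_le_one_of_le_one_div_mul_sqrt {η a s : ℝ} (hη : 0 < η)
    (h : η ≤ 1 / (a * √s)) : η ^ 2 * a ^ 2 * s ≤ 1 := by
  have hpos : 0 < a * √s := one_div_pos.mp (hη.trans_le h)
  have hs : 0 ≤ s := by
    by_contra! hs
    simp [Real.sqrt_eq_zero_of_nonpos hs.le] at hpos
  have hle : η * (a * √s) ≤ 1 := (le_div_iff₀ hpos).mp h
  calc η ^ 2 * a ^ 2 * s = (η * (a * √s)) ^ 2 := by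
        rw [mul_pow, mul_pow, Real.sq_sqrt hs]; ring
    _ ≤ 1 := pow_le_one₀ (by positivity) hle

theorem sum_range_natCast_le (n : ℕ) : ∑ j ∈ range n, (j : ℝ) ≤ n ^ 2 / 2 := by
  have h : (∑ j ∈ range n, j) * 2 ≤ n * n :=
    (Finset.sum_range_id_mul_two n).trans_le (Nat.mul_le_mul_left _ (Nat.sub_le _ _))
  have h' := (Nat.cast_le (α := ℝ)).mpr h
  push_cast at h'
  nlinarith

-- Past the end of the epoch this is `0`, matching `epochIter`, which is constant from step `n` on.
def epochOracle {E : Type*} [Zero E] {n : ℕ} (g : Fin n → E → E) (π : Equiv.Perm (Fin n))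
    (k : ℕ) : E → E :=
  if h : k < n then g (π ⟨k, h⟩) else 0

section EpochOracle

variable {E : Type*} {n : ℕ} (g : Fin n → E → E) (π : Equiv.Perm (Fin n))

theorem sum_range_epochOracle [AddCommMonoid E] (x : E) {j : ℕ} (hj : j ≤ n) :
    ∑ k ∈ range j, epochOracle g π k x =
      ∑ i ∈ univ.filter (fun i : Fin n => (i : ℕ) < j), g (π i) x := by
  rw [Finset.sum_filter, Finset.sum_fin_eq_sum_range, ← Finset.sum_range_add_sum_Ico _ hj,
    Finset.sum_eq_zero (s := Ico j n) fun k hk => by simp [(Finset.mem_Ico.mp hk).1.not_gt],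
    add_zero]
  refine Finset.sum_congr rfl fun k hk => ?_
  have hkj := Finset.mem_range.mp hk
  simp [epochOracle, hkj, hkj.trans_le hj]

theorem sum_range_epochOracle_self [AddCommMonoid E] (x : E) :
    ∑ k ∈ range n, epochOracle g π k x = ∑ i, g i x := by
  rw [sum_range_epochOracle g π x le_rfl, Finset.filter_true_of_mem fun i _ => i.isLt]
  exact Equiv.sum_comp π (fun i => g i x)

theorem norm_epochOracle_sub_le [SeminormedAddCommGroup E] {Lmax : ℝ} (hLmax : 0 ≤ Lmax)
    (hg : ∀ i x y, ‖g i x - g i y‖ ≤ Lmax * ‖x - y‖) (k : ℕ) (x y : E) :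
    ‖epochOracle g π k x - epochOracle g π k y‖ ≤ Lmax * ‖x - y‖ := by
  unfold epochOracle
  split_ifs
  · exact hg _ x y
  · simpa using mul_nonneg hLmax (norm_nonneg (x - y))

end EpochOracle

section EpochIter

variable {d n : ℕ} (g : Fin n → EuclideanSpace ℝ (Fin d) → EuclideanSpace ℝ (Fin d))
  (η : ℝ) (x0 : EuclideanSpace ℝ (Fin d)) (π : Equiv.Perm (Fin n))

theorem epochIter_succ (j : ℕ) :
    epochIter g η x0 π (j + 1) =
      epochIter g η x0 π j - η • epochOracle g π j (epochIter g η x0 π j) := by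
  rw [epochIter, epochOracle]
  split_ifs <;> simp

theorem epochIter_eq_sub_smul_sum (j : ℕ) :
    epochIter g η x0 π j =
      x0 - η • ∑ k ∈ range j, epochOracle g π k (epochIter g η x0 π k) := by
  induction j with
  | zero => simp [epochIter]
  | succ j ih => rw [epochIter_succ, Finset.sum_range_succ, smul_add, ← sub_sub, ← ih]

variable {η} {Lmax : ℝ} (hη : 0 ≤ η) (hLmax : 0 ≤ Lmax)
  (hg : ∀ i x y, ‖g i x - g i y‖ ≤ Lmax * ‖x - y‖)
include hη hLmax hg

omit hη in
theorem norm_sum_epochOracle_sub_le (j : ℕ) :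
    ‖∑ k ∈ range j, (epochOracle g π k (epochIter g η x0 π k) - epochOracle g π k x0)‖ ≤
      Lmax * ∑ k ∈ range j, ‖epochIter g η x0 π k - x0‖ := by
  rw [Finset.mul_sum]
  exact (norm_sum_le _ _).trans <| Finset.sum_le_sum fun k _ =>
    norm_epochOracle_sub_le g π hLmax hg k _ _

theorem norm_epochIter_sub_le (j : ℕ) :
    ‖epochIter g η x0 π j - x0‖ ≤ η * ‖∑ k ∈ range j, epochOracle g π k x0‖ +
      η * Lmax * ∑ k ∈ range j, ‖epochIter g η x0 π k - x0‖ := by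
  have hsplit : epochIter g η x0 π j - x0 = -(η • (∑ k ∈ range j, epochOracle g π k x0 +
      ∑ k ∈ range j, (epochOracle g π k (epochIter g η x0 π k) - epochOracle g π k x0))) := by
    rw [epochIter_eq_sub_smul_sum, Finset.sum_sub_distrib, add_sub_cancel]
    abel
  rw [hsplit, norm_neg, norm_smul, Real.norm_of_nonneg hη, mul_assoc, ← mul_add]
  gcongr
  exact (norm_add_le _ _).trans
    (add_le_add_right (norm_sum_epochOracle_sub_le g x0 π hLmax hg j) _)

theorem sum_sq_norm_epochIter_sub_le (hstep : η * Lmax * n ≤ 1 / 2) :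
    ∑ j ∈ range n, ‖epochIter g η x0 π j - x0‖ ^ 2 ≤
      4 * η ^ 2 * ∑ j ∈ range n, ‖∑ k ∈ range j, epochOracle g π k x0‖ ^ 2 := by
  have h := sum_sq_le_four_mul_sum_sq_of_le_add_mul_sum (n := n) (fun j => norm_nonneg _)
    (mul_nonneg hη hLmax) (by linarith) fun j _ => norm_epochIter_sub_le g x0 π hη hLmax hg j
  simpa [mul_pow, Finset.mul_sum, mul_assoc] using h

theorem apply_epochIter_le {F : EuclideanSpace ℝ (Fin d) → ℝ} (hF : Differentiable ℝ F)
    {L : ℝ} (hFL : ∀ x y, ‖gradient F x - gradient F y‖ ≤ L * ‖x - y‖) (hn : 0 < n)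
    (hLη : η * L * n ≤ 1) (hmean : ∑ i, g i x0 = (n : ℝ) • gradient F x0) :
    F (epochIter g η x0 π n) ≤ F x0 - η * n / 2 * ‖gradient F x0‖ ^ 2 +
      η * Lmax ^ 2 / 2 * ∑ j ∈ range n, ‖epochIter g η x0 π j - x0‖ ^ 2 := by
  set W := ∑ k ∈ range n, epochOracle g π k (epochIter g η x0 π k)
  have hnpos : (0 : ℝ) < n := by exact_mod_cast hn
  have hdev : ‖W - (n : ℝ) • gradient F x0‖ ≤
      Lmax * ∑ j ∈ range n, ‖epochIter g η x0 π j - x0‖ := by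
    rw [← hmean, ← sum_range_epochOracle_self g π, ← Finset.sum_sub_distrib]
    exact norm_sum_epochOracle_sub_le g x0 π hLmax hg n
  have hdev_sq : ‖W - (n : ℝ) • gradient F x0‖ ^ 2 ≤
      Lmax ^ 2 * n * ∑ j ∈ range n, ‖epochIter g η x0 π j - x0‖ ^ 2 := by
    have hcs := sq_sum_le_card_mul_sum_sq (s := range n)
      (f := fun j => ‖epochIter g η x0 π j - x0‖)
    rw [Finset.card_range] at hcs
    calc ‖W - (n : ℝ) • gradient F x0‖ ^ 2
        ≤ (Lmax * ∑ j ∈ range n, ‖epochIter g η x0 π j - x0‖) ^ 2 :=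
          pow_le_pow_left₀ (norm_nonneg _) hdev 2
      _ ≤ _ := by rw [mul_pow, mul_assoc]; gcongr
  calc F (epochIter g η x0 π n) = F (x0 - η • W) := by rw [epochIter_eq_sub_smul_sum]
    _ ≤ F x0 - η * n / 2 * ‖gradient F x0‖ ^ 2 +
          η / (2 * n) * ‖W - (n : ℝ) • gradient F x0‖ ^ 2 :=
        apply_sub_smul_le_of_lipschitz_gradient hF hFL hη hnpos hLη x0 W
    _ ≤ _ := by
        grw [hdev_sq]
        exact le_of_eq (by field_simp)

theorem sum_perm_sum_sq_norm_epochIter_sub_le (hn : 2 ≤ n) {ρ : ℝ}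
    (hstep : η * Lmax * n ≤ 1 / 2)
    (gbar : EuclideanSpace ℝ (Fin d)) (hmean : ∑ i, g i x0 = (n : ℝ) • gbar)
    (hvar : ∑ i, ‖g i x0‖ ^ 2 ≤ n * ρ * ‖gbar‖ ^ 2) :
    ∑ π : Equiv.Perm (Fin n), ∑ j ∈ range n, ‖epochIter g η x0 π j - x0‖ ^ 2 ≤
      n.factorial * (2 * η ^ 2 * n ^ 2 * (ρ + n) * ‖gbar‖ ^ 2) := by
  have hperm : ∀ j ∈ range n,
      ∑ π : Equiv.Perm (Fin n), ‖∑ k ∈ range j, epochOracle g π k x0‖ ^ 2 ≤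
      n.factorial * ((ρ + n) * j * ‖gbar‖ ^ 2) := fun j hj => by
    have hjn : j ≤ n := (Finset.mem_range.mp hj).le
    simp_rw [sum_range_epochOracle g _ x0 hjn]
    simpa [Fin.card_filter_val_lt, hjn] using
      sum_perm_norm_sq_sum_le (by simpa using hn) (fun i => g i x0) gbar (by simpa using hmean)
        (by simpa using hvar) (univ.filter fun i : Fin n => (i : ℕ) < j)
  have hρG : 0 ≤ (ρ + n) * ‖gbar‖ ^ 2 := by
    have hnpos : (0 : ℝ) < n := by positivity
    have hV : 0 ≤ ∑ i, ‖g i x0‖ ^ 2 := Finset.sum_nonneg fun i _ => sq_nonneg _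
    have hρ : 0 ≤ ρ * ‖gbar‖ ^ 2 :=
      nonneg_of_mul_nonneg_right (by linarith : 0 ≤ (n : ℝ) * (ρ * ‖gbar‖ ^ 2)) hnpos
    nlinarith [sq_nonneg ‖gbar‖]
  calc ∑ π : Equiv.Perm (Fin n), ∑ j ∈ range n, ‖epochIter g η x0 π j - x0‖ ^ 2
      ≤ ∑ π : Equiv.Perm (Fin n),
          4 * η ^ 2 * ∑ j ∈ range n, ‖∑ k ∈ range j, epochOracle g π k x0‖ ^ 2 :=
        Finset.sum_le_sum fun π _ => sum_sq_norm_epochIter_sub_le g x0 π hη hLmax hg hstep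
    _ = 4 * η ^ 2 * ∑ j ∈ range n,
          ∑ π : Equiv.Perm (Fin n), ‖∑ k ∈ range j, epochOracle g π k x0‖ ^ 2 := by
        rw [← Finset.mul_sum, Finset.sum_comm]
    _ ≤ 4 * η ^ 2 * ∑ j ∈ range n, n.factorial * ((ρ + n) * j * ‖gbar‖ ^ 2) := by
        gcongr with j hj
        exact hperm j hj
    _ = 4 * η ^ 2 * (n.factorial * ((ρ + n) * ‖gbar‖ ^ 2)) * ∑ j ∈ range n, (j : ℝ) := by
        rw [Finset.mul_sum, Finset.mul_sum]
        refine Finset.sum_congr rfl fun j _ => by ring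
    _ ≤ 4 * η ^ 2 * (n.factorial * ((ρ + n) * ‖gbar‖ ^ 2)) * (n ^ 2 / 2) := by
        gcongr
        exact sum_range_natCast_le n
    _ = _ := by ring

theorem sum_perm_apply_epochIter_le (hn : 2 ≤ n) {F : EuclideanSpace ℝ (Fin d) → ℝ}
    (hF : Differentiable ℝ F) {L : ℝ}
    (hFL : ∀ x y, ‖gradient F x - gradient F y‖ ≤ L * ‖x - y‖) (hLLmax : L ≤ Lmax) {ρ : ℝ}
    (hmean : ∑ i, g i x0 = (n : ℝ) • gradient F x0)
    (hvar : ∑ i, ‖g i x0‖ ^ 2 ≤ n * ρ * ‖gradient F x0‖ ^ 2) (hstep : η * Lmax * n ≤ 1 / 2)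
    (hstep' : η ^ 2 * Lmax ^ 2 * (n * ρ) ≤ 1 / 8) :
    ∑ π : Equiv.Perm (Fin n), F (epochIter g η x0 π n) ≤
      n.factorial * (F x0 - η * n / 8 * ‖gradient F x0‖ ^ 2) := by
  set G := ‖gradient F x0‖ ^ 2
  have hLη : η * L * n ≤ 1 := by
    nlinarith [mul_le_mul_of_nonneg_right hLLmax (by positivity : (0 : ℝ) ≤ η * n)]
  have hdev := sum_perm_sum_sq_norm_epochIter_sub_le g x0 hη hLmax hg hn hstep _ hmean hvar
  have hcoef : η * Lmax ^ 2 / 2 * (2 * η ^ 2 * n ^ 2 * (ρ + n)) ≤ 3 / 8 * (η * n) := by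
    have hsq : (η * Lmax * n) ^ 2 ≤ 1 / 4 := by
      nlinarith [mul_nonneg (mul_nonneg hη hLmax) (Nat.cast_nonneg n)]
    have hηn : 0 ≤ η * n := by positivity
    nlinarith [mul_le_mul_of_nonneg_left hstep' hηn, mul_le_mul_of_nonneg_left hsq hηn]
  calc ∑ π : Equiv.Perm (Fin n), F (epochIter g η x0 π n)
      ≤ ∑ π : Equiv.Perm (Fin n), (F x0 - η * n / 2 * G +
          η * Lmax ^ 2 / 2 * ∑ j ∈ range n, ‖epochIter g η x0 π j - x0‖ ^ 2) :=
        Finset.sum_le_sum fun π _ =>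
          apply_epochIter_le g x0 π hη hLmax hg hF hFL (by omega) hLη hmean
    _ = n.factorial * (F x0 - η * n / 2 * G) + η * Lmax ^ 2 / 2 *
          ∑ π : Equiv.Perm (Fin n), ∑ j ∈ range n, ‖epochIter g η x0 π j - x0‖ ^ 2 := by
        rw [Finset.sum_add_distrib, Finset.sum_const, Finset.card_univ, Fintype.card_perm,
          Fintype.card_fin, nsmul_eq_mul, Finset.mul_sum]
    _ ≤ n.factorial * (F x0 - η * n / 2 * G) + η * Lmax ^ 2 / 2 *
          (n.factorial * (2 * η ^ 2 * n ^ 2 * (ρ + n) * G)) := by gcongr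
    _ ≤ n.factorial * (F x0 - η * n / 8 * G) := by
        nlinarith [mul_le_mul_of_nonneg_right hcoef
          (by positivity : (0 : ℝ) ≤ n.factorial * G)]

end EpochIter

theorem rr_epoch_contraction_pl_sgc_general
    (d n : ℕ) (hn : 2 ≤ n)
    (f : Fin n → EuclideanSpace ℝ (Fin d) → ℝ)
    (hdiff : ∀ i, Differentiable ℝ (f i))
    (F : EuclideanSpace ℝ (Fin d) → ℝ)
    (hF : F = fun x => (n : ℝ)⁻¹ * ∑ i, f i x)
    (L Lmax μ ρ : ℝ) (hμ : 0 < μ) (hLLmax : L ≤ Lmax)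
    (hsmooth : ∀ x y : EuclideanSpace ℝ (Fin d),
      ‖gradient F x - gradient F y‖ ≤ L * ‖x - y‖)
    (hsmooth_i : ∀ i, ∀ x y : EuclideanSpace ℝ (Fin d),
      ‖gradient (f i) x - gradient (f i) y‖ ≤ Lmax * ‖x - y‖)
    (xstar : EuclideanSpace ℝ (Fin d))
    (hPL : ∀ x, F x - F xstar ≤ 1 / (2 * μ) * ‖gradient F x‖ ^ 2)
    (hSGC : ∀ x, (n : ℝ)⁻¹ * ∑ i, ‖gradient (f i) x‖ ^ 2 ≤ ρ * ‖gradient F x‖ ^ 2)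
    (η : ℝ) (hη0 : 0 < η)
    (hη : η ≤ min (1 / (2 * n * Lmax)) (1 / (2 * Real.sqrt 2 * Lmax * Real.sqrt (n * ρ))))
    (x0 : EuclideanSpace ℝ (Fin d)) :
    ((Nat.factorial n : ℝ))⁻¹ *
        ∑ π : Equiv.Perm (Fin n),
          F (epochIter (fun i => gradient (f i)) η x0 π n) - F xstar
      ≤ (1 - n * μ * η / 4) * (F x0 - F xstar) := by
  obtain ⟨hLmax, hstep⟩ : 0 < Lmax ∧ η * Lmax * n ≤ 1 / 2 := by
    have h := hη.trans (min_le_left _ _)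
    have hpos : 0 < 2 * n * Lmax := one_div_pos.mp (hη0.trans_le h)
    have hle := (le_div_iff₀ hpos).mp h
    exact ⟨pos_of_mul_pos_right hpos (by positivity), by linarith⟩
  have hstep' : η ^ 2 * Lmax ^ 2 * (n * ρ) ≤ 1 / 8 := by
    have h := sq_mul_sq_mul_le_one_of_le_one_div_mul_sqrt hη0 (hη.trans (min_le_right _ _))
    rw [mul_pow, mul_pow, Real.sq_sqrt zero_le_two] at h
    linarith
  have hgrad : ∀ x, HasGradientAt F ((n : ℝ)⁻¹ • ∑ i, gradient (f i) x) x := by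
    rw [hF]
    exact hasGradientAt_const_mul_sum hdiff _
  have hmean : ∑ i, gradient (f i) x0 = (n : ℝ) • gradient F x0 := by
    rw [(hgrad x0).gradient, smul_inv_smul₀ (by positivity)]
  have hvar : ∑ i, ‖gradient (f i) x0‖ ^ 2 ≤ n * ρ * ‖gradient F x0‖ ^ 2 := by
    simpa [mul_assoc] using (inv_mul_le_iff₀ (by positivity)).mp (hSGC x0)
  have hdesc := sum_perm_apply_epochIter_le (fun i => gradient (f i)) x0 hη0.le hLmax.le
    hsmooth_i hn (fun x => (hgrad x).differentiableAt) hsmooth hLLmax hmean hvar hstep hstep'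
  have hPL0 : μ * (F x0 - F xstar) ≤ ‖gradient F x0‖ ^ 2 / 2 :=
    calc μ * (F x0 - F xstar) ≤ μ * (1 / (2 * μ) * ‖gradient F x0‖ ^ 2) :=
          mul_le_mul_of_nonneg_left (hPL x0) hμ.le
      _ = ‖gradient F x0‖ ^ 2 / 2 := by field_simp
  have hfac : (0 : ℝ) < n.factorial := by positivity
  nlinarith [(inv_mul_le_iff₀ hfac).mpr hdesc,
    mul_le_mul_of_nonneg_left hPL0 (by positivity : (0 : ℝ) ≤ η * n / 4)]

/-- Epoch-level contraction for random reshuffling under the PL condition and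
the (noiseless) strong growth condition; the expectation is over the uniformly
random permutation used in the epoch. -/
theorem rr_epoch_contraction_pl_sgc
    (d n : ℕ) (hn : 2 ≤ n)
    (f : Fin n → EuclideanSpace ℝ (Fin d) → ℝ)
    (hdiff : ∀ i, Differentiable ℝ (f i))
    (F : EuclideanSpace ℝ (Fin d) → ℝ)
    (hF : F = fun x => (n : ℝ)⁻¹ * ∑ i, f i x)
    (L Lmax μ ρ : ℝ) (hL : 0 < L) (hμ : 0 < μ) (hLLmax : L ≤ Lmax) (hρ : 1 ≤ ρ)
    (hsmooth : ∀ x y : EuclideanSpace ℝ (Fin d),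
      ‖gradient F x - gradient F y‖ ≤ L * ‖x - y‖)
    (hsmooth_i : ∀ i, ∀ x y : EuclideanSpace ℝ (Fin d),
      ‖gradient (f i) x - gradient (f i) y‖ ≤ Lmax * ‖x - y‖)
    (xstar : EuclideanSpace ℝ (Fin d))
    (hmin : ∀ x, F xstar ≤ F x)
    (hPL : ∀ x, F x - F xstar ≤ 1 / (2 * μ) * ‖gradient F x‖ ^ 2)
    (hSGC : ∀ x, (n : ℝ)⁻¹ * ∑ i, ‖gradient (f i) x‖ ^ 2 ≤ ρ * ‖gradient F x‖ ^ 2)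
    (η : ℝ) (hη0 : 0 < η)
    (hη : η ≤ min (1 / (2 * n * Lmax)) (1 / (2 * Real.sqrt 2 * Lmax * Real.sqrt (n * ρ))))
    (x0 : EuclideanSpace ℝ (Fin d)) :
    ((Nat.factorial n : ℝ))⁻¹ *
        ∑ π : Equiv.Perm (Fin n),
          F (epochIter (fun i => gradient (f i)) η x0 π n) - F xstar
      ≤ (1 - n * μ * η / 4) * (F x0 - F xstar) :=
  rr_epoch_contraction_pl_sgc_general d n hn f hdiff F hF L Lmax μ ρ hμ hLLmax hsmooth hsmooth_i
    xstar hPL hSGC η hη0 hη x0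
end
end
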